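/- arXiv:2008.01428 — 5 statements merged into one kernel-verified Lean document; each statement's English description precedes it below -/
import Mathlib

section
/- For any numerical semigroup H one has res(H) ≤ n(H), and equality res(H) = n(H) holds if and only if tr(H) = C_H. -/
namespace NumSgp

/-- A numerical semigroup: an additive submonoid of ℕ with finite complement. -/
def IsNumSgp (H : Set ℕ) : Prop :=
  0 ∈ H ∧ (∀ a ∈ H, ∀ b ∈ H, a + b ∈ H) ∧ Hᶜ.Finite

/-- Membership of an integer in (the image in ℤ of) `H ⊆ ℕ`. -/
def memZ (H : Set ℕ) (z : ℤ) : Prop := ∃ n ∈ H, (n : ℤ) = z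

/-- The Frobenius number: the largest integer not in `H`. -/
noncomputable def frob (H : Set ℕ) : ℤ := sSup {z : ℤ | ¬ memZ H z}

/-- The pseudo-Frobenius numbers of `H`. -/
def pseudoFrob (H : Set ℕ) : Set ℤ :=
  {f : ℤ | ¬ memZ H f ∧ ∀ m ∈ H, m ≠ 0 → memZ H (f + (m : ℤ))}

/-- The canonical ideal `Ω_H = {-f + h : f ∈ PF(H), h ∈ H}`. -/
def canIdeal (H : Set ℕ) : Set ℤ :=
  {z : ℤ | ∃ f ∈ pseudoFrob H, ∃ h ∈ H, z = -f + (h : ℤ)}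

/-- The anti-canonical ideal `Ω_H⁻¹ = {x : x + Ω_H ⊆ H}`. -/
def antiCanIdeal (H : Set ℕ) : Set ℤ :=
  {x : ℤ | ∀ w ∈ canIdeal H, memZ H (x + w)}

/-- The trace of `H`: the sumset `Ω_H + Ω_H⁻¹`. -/
def trace (H : Set ℕ) : Set ℤ :=
  {z : ℤ | ∃ w ∈ canIdeal H, ∃ x ∈ antiCanIdeal H, z = w + x}

/-- The conductor ideal `C_H = {x : x > Fr(H)}` (viewed inside ℤ). -/
noncomputable def condIdeal (H : Set ℕ) : Set ℤ := {z : ℤ | frob H < z}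

/-- The residue of `H`: `|H ∖ tr(H)|`. -/
noncomputable def res (H : Set ℕ) : ℕ :=
  Set.ncard {h : ℕ | h ∈ H ∧ (h : ℤ) ∉ trace H}

/-- The number of gaps `g(H)`. -/
noncomputable def gaps (H : Set ℕ) : ℕ := Set.ncard Hᶜ

/-- The number of non-gaps below the Frobenius number, `n(H)`. -/
noncomputable def nongaps (H : Set ℕ) : ℕ :=
  Set.ncard {x : ℕ | x ∈ H ∧ (x : ℤ) < frob H}

/-- `H` is symmetric if for all `x ∈ ℤ`, `x ∈ H` or `Fr(H) - x ∈ H`. -/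
noncomputable def IsSymmetric (H : Set ℕ) : Prop :=
  ∀ z : ℤ, memZ H z ∨ memZ H (frob H - z)

/-- `H` is nearly Gorenstein if `M = H ∖ {0} ⊆ tr(H)`. -/
def NearlyGorenstein (H : Set ℕ) : Prop :=
  ∀ h ∈ H, h ≠ 0 → (h : ℤ) ∈ trace H

/-- The submonoid of ℕ generated by a set. -/
def genBy (A : Set ℕ) : Set ℕ := (AddSubmonoid.closure A : Set ℕ)

end NumSgp

open NumSgp

/-!
Since `-Fr(H) ∈ Ω_H` and every `-f + h ∈ Ω_H` is at least `-Fr(H)`, each `z > Fr(H)` is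
`-Fr(H) + (z + Fr(H))` with `z + Fr(H) ∈ Ω_H⁻¹`, so `C_H ⊆ tr(H) ⊆ H`. As `Fr(H) ∉ H`, the elements
of `H` outside the trace all lie below `Fr(H)`, which gives `res(H) ≤ n(H)`; equality means that no
element of `H` below `Fr(H)` lies in the trace, i.e. `tr(H) ⊆ C_H`.
-/

lemma Set.ncard_eq_ncard_iff_of_subset {α : Type*} {s t : Set α} (hst : s ⊆ t) (ht : t.Finite) :
    s.ncard = t.ncard ↔ t ⊆ s :=
  ⟨fun h => (Set.eq_of_subset_of_ncard_le hst h.ge ht).ge,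
    fun hts => congrArg Set.ncard (hst.antisymm hts)⟩

namespace NumSgp

section Frobenius

variable {H : Set ℕ}

lemma not_memZ_of_neg {z : ℤ} (hz : z < 0) : ¬ memZ H z := by
  rintro ⟨n, -, rfl⟩
  omega

lemma bddAbove_not_memZ (hfin : Hᶜ.Finite) : BddAbove {z : ℤ | ¬ memZ H z} := by
  obtain ⟨N, hN⟩ := hfin.bddAbove
  refine ⟨N, fun z hz => ?_⟩
  rcases lt_or_ge z 0 with hneg | hnonneg
  · omega
  · have : z.toNat ≤ N := hN fun hmem => hz ⟨z.toNat, hmem, Int.toNat_of_nonneg hnonneg⟩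
    omega

lemma frob_not_memZ (hfin : Hᶜ.Finite) : ¬ memZ H (frob H) :=
  Int.csSup_mem ⟨-1, not_memZ_of_neg (by norm_num)⟩ (bddAbove_not_memZ hfin)

lemma natCast_ne_frob (hfin : Hᶜ.Finite) {x : ℕ} (hx : x ∈ H) : (x : ℤ) ≠ frob H :=
  fun e => frob_not_memZ hfin (e ▸ ⟨x, hx, rfl⟩)

lemma memZ_of_frob_lt (hfin : Hᶜ.Finite) {z : ℤ} (hz : frob H < z) : memZ H z := by
  by_contra h
  exact hz.not_ge (le_csSup (bddAbove_not_memZ hfin) h)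

lemma le_frob_of_mem_pseudoFrob (hfin : Hᶜ.Finite) {f : ℤ} (hf : f ∈ pseudoFrob H) :
    f ≤ frob H :=
  le_csSup (bddAbove_not_memZ hfin) hf.1

lemma frob_mem_pseudoFrob (hfin : Hᶜ.Finite) : frob H ∈ pseudoFrob H :=
  ⟨frob_not_memZ hfin, fun m _ hm0 => memZ_of_frob_lt hfin (by omega)⟩

lemma finite_setOf_lt_frob (H : Set ℕ) : {x : ℕ | x ∈ H ∧ (x : ℤ) < frob H}.Finite :=
  (Set.finite_Iio (frob H).toNat).subset fun _ hx => Int.lt_toNat.mpr hx.2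

end Frobenius

section Trace

variable {H : Set ℕ}

lemma memZ_of_mem_trace {z : ℤ} (hz : z ∈ trace H) : memZ H z := by
  obtain ⟨w, hw, x, hx, rfl⟩ := hz
  rw [add_comm]
  exact hx w hw

lemma condIdeal_subset_trace (h0 : 0 ∈ H) (hfin : Hᶜ.Finite) : condIdeal H ⊆ trace H := by
  intro z (hz : frob H < z)
  refine ⟨-frob H, ⟨frob H, frob_mem_pseudoFrob hfin, 0, h0, by simp⟩, z + frob H, ?_, by ring⟩
  rintro _ ⟨f, hf, h, -, rfl⟩
  have := le_frob_of_mem_pseudoFrob hfin hf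
  exact memZ_of_frob_lt hfin (by omega)

lemma lt_frob_of_notMem_trace (h0 : 0 ∈ H) (hfin : Hᶜ.Finite) {x : ℕ} (hx : x ∈ H)
    (hxt : (x : ℤ) ∉ trace H) : (x : ℤ) < frob H := by
  have hne := natCast_ne_frob hfin hx
  have hle : ¬ frob H < x := fun hlt => hxt (condIdeal_subset_trace h0 hfin hlt)
  omega

lemma trace_eq_condIdeal_iff (h0 : 0 ∈ H) (hfin : Hᶜ.Finite) :
    trace H = condIdeal H ↔ ∀ x ∈ H, (x : ℤ) < frob H → (x : ℤ) ∉ trace H := by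
  refine ⟨fun htr x _ hlt hxt => (htr ▸ hxt : (x : ℤ) ∈ condIdeal H).not_gt hlt,
    fun h => Set.Subset.antisymm (fun z hz => ?_) (condIdeal_subset_trace h0 hfin)⟩
  obtain ⟨x, hx, rfl⟩ := memZ_of_mem_trace hz
  have hne := natCast_ne_frob hfin hx
  have hle : ¬ (x : ℤ) < frob H := fun hlt => h x hx hlt hz
  show frob H < x
  omega

end Trace

end NumSgp

/-- `res(H) ≤ n(H)`, with equality iff `tr(H) = C_H`. -/
theorem stmt_1 (H : Set ℕ) (hH : IsNumSgp H) :
    res H ≤ nongaps H ∧ (res H = nongaps H ↔ trace H = condIdeal H) := by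
  obtain ⟨h0, -, hfin⟩ := hH
  have hsub : {h : ℕ | h ∈ H ∧ (h : ℤ) ∉ trace H} ⊆ {x : ℕ | x ∈ H ∧ (x : ℤ) < frob H} :=
    fun x ⟨hx, hxt⟩ => ⟨hx, lt_frob_of_notMem_trace h0 hfin hx hxt⟩
  refine ⟨Set.ncard_le_ncard hsub (finite_setOf_lt_frob H), ?_⟩
  rw [res, nongaps, Set.ncard_eq_ncard_iff_of_subset hsub (finite_setOf_lt_frob H),
    trace_eq_condIdeal_iff h0 hfin]
  exact ⟨fun h x hx hlt => (h ⟨hx, hlt⟩).2, fun h x ⟨hx, hlt⟩ => ⟨hx, h x hx hlt⟩⟩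
end

section
/- Let e > 2 and let a, d be coprime nonnegative integers with e ≤ a, and let H be the numerical semigroup generated by the arithmetic sequence a, a+d, a+2d, …, a+(e−1)d. Then H is nearly Gorenstein. -/
open NumSgp

/-! Since `gcd(a, d) = 1`, every integer is uniquely `k a + t d` with `0 ≤ t < a`, and it lies in
`H` iff `t ≤ k (e - 1)`. Writing `a - 1 = q (e - 1) + r` with `0 < r ≤ e - 1`, this criterion
gives `PF(H) = {f_j := q a + (a - 1 - j) d : 0 ≤ j < r}`. For `m = k a + t d ∈ M` put
`j₀ = min(t, r - 1)`: then `-f_{j₀} ∈ Ω_H`, and `m + f_{j₀} ∈ Ω_H⁻¹` because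
`m + f_{j₀} - f_j = k a + (t - j₀ + j) d` satisfies the criterion for every `j < r`.
Hence `m = -f_{j₀} + (m + f_{j₀}) ∈ tr(H)`. -/

namespace NumSgp

section genBy

variable {A : Set ℕ}

theorem zero_mem_genBy : 0 ∈ genBy A :=
  (AddSubmonoid.closure A).zero_mem

theorem add_mem_genBy {m n : ℕ} (hm : m ∈ genBy A) (hn : n ∈ genBy A) : m + n ∈ genBy A :=
  (AddSubmonoid.closure A).add_mem hm hn

theorem memZ_genBy_add {x y : ℤ} (hx : memZ (genBy A) x) (hy : memZ (genBy A) y) :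
    memZ (genBy A) (x + y) := by
  obtain ⟨m, hm, rfl⟩ := hx
  obtain ⟨n, hn, rfl⟩ := hy
  exact ⟨m + n, add_mem_genBy hm hn, by push_cast; rfl⟩

theorem mem_pseudoFrob_genBy {f : ℤ} (hf : ¬ memZ (genBy A) f)
    (hA : ∀ g ∈ A, memZ (genBy A) (f + g)) : f ∈ pseudoFrob (genBy A) := by
  refine ⟨hf, fun m hm => ?_⟩
  change m ∈ AddSubmonoid.closure A at hm
  induction hm using AddSubmonoid.closure_induction with
  | mem g hg => exact fun _ => hA g hg
  | zero => exact fun h => absurd rfl h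
  | add x y _ hy ihx ihy =>
    intro hxy
    rcases eq_or_ne x 0 with rfl | hx0
    · simpa using ihy (by simpa using hxy)
    · simpa [add_assoc] using memZ_genBy_add (ihx hx0) ⟨y, hy, rfl⟩

end genBy

theorem mem_trace_of_add_mem_antiCanIdeal {H : Set ℕ} (h0 : 0 ∈ H) {f z : ℤ}
    (hf : f ∈ pseudoFrob H) (hz : z + f ∈ antiCanIdeal H) : z ∈ trace H :=
  ⟨-f, ⟨f, hf, 0, h0, by simp⟩, z + f, hz, by ring⟩

theorem exists_eq_mul_add_mul_of_coprime {a d : ℕ} (ha : 0 < a) (hcop : Nat.Coprime a d)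
    (z : ℤ) : ∃ k t : ℤ, 0 ≤ t ∧ t < a ∧ z = k * a + t * d := by
  obtain ⟨u, v, huv⟩ := Nat.isCoprime_iff_coprime.mpr hcop
  refine ⟨z * u + z * v / a * d, z * v % a, Int.emod_nonneg _ (by positivity),
    Int.emod_lt_of_pos _ (by positivity), ?_⟩
  linear_combination (-z) * huv - (d : ℤ) * Int.mul_ediv_add_emod (z * v) a

theorem exists_eq_mul_add_of_pos {n b : ℤ} (hn : 0 < n) (hb : 0 < b) :
    ∃ q r : ℤ, n = q * b + r ∧ 0 ≤ q ∧ 0 < r ∧ r ≤ b := by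
  refine ⟨(n - 1) / b, (n - 1) % b + 1, ?_, Int.ediv_nonneg (by omega) hb.le,
    by linarith [Int.emod_nonneg (n - 1) hb.ne'], by linarith [Int.emod_lt_of_pos (n - 1) hb]⟩
  linarith [Int.mul_ediv_add_emod (n - 1) b]

def arithSeqSgp (e a d : ℕ) : Set ℕ := genBy {x : ℕ | ∃ i < e, x = a + i * d}

section arithSeqSgp

variable {e a d : ℕ}

theorem add_mul_mem_arithSeqSgp (he : 0 < e) {k t : ℕ} (ht : t ≤ k * (e - 1)) :
    k * a + t * d ∈ arithSeqSgp e a d := by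
  induction k generalizing t with
  | zero =>
    obtain rfl : t = 0 := by simpa using ht
    rw [zero_mul, zero_mul, add_zero]
    exact zero_mem_genBy
  | succ k ih =>
    obtain ⟨i, s, hi, hs, rfl⟩ : ∃ i s, i < e ∧ s ≤ k * (e - 1) ∧ t = i + s := by
      rw [Nat.succ_mul] at ht
      exact ⟨min t (e - 1), t - min t (e - 1), by omega, by omega, by omega⟩
    have hgen : a + i * d ∈ arithSeqSgp e a d := AddSubmonoid.subset_closure ⟨i, hi, rfl⟩
    rw [show (k + 1) * a + (i + s) * d = (a + i * d) + (k * a + s * d) by ring]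
    exact add_mem_genBy hgen (ih hs)

theorem exists_of_mem_arithSeqSgp {n : ℕ} (hn : n ∈ arithSeqSgp e a d) :
    ∃ k t : ℕ, t ≤ k * (e - 1) ∧ n = k * a + t * d := by
  change n ∈ AddSubmonoid.closure _ at hn
  induction hn using AddSubmonoid.closure_induction with
  | mem x hx =>
    obtain ⟨i, hi, rfl⟩ := hx
    exact ⟨1, i, by omega, by ring⟩
  | zero => exact ⟨0, 0, Nat.zero_le _, by ring⟩
  | add x y _ _ hx hy =>
    obtain ⟨k₁, t₁, h₁, rfl⟩ := hx
    obtain ⟨k₂, t₂, h₂, rfl⟩ := hy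
    exact ⟨k₁ + k₂, t₁ + t₂, by rw [add_mul]; omega, by ring⟩

theorem memZ_arithSeqSgp_iff (he : 2 ≤ e) {z : ℤ} :
    memZ (arithSeqSgp e a d) z ↔ ∃ k t : ℤ, 0 ≤ t ∧ t ≤ k * (e - 1) ∧ z = k * a + t * d := by
  constructor
  · rintro ⟨n, hn, rfl⟩
    obtain ⟨k, t, ht, rfl⟩ := exists_of_mem_arithSeqSgp hn
    zify [show 1 ≤ e by omega] at ht
    exact ⟨k, t, by positivity, ht, by push_cast; ring⟩
  · rintro ⟨k, t, ht0, hte, rfl⟩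
    lift k to ℕ using by nlinarith
    lift t to ℕ using ht0
    refine ⟨_, add_mul_mem_arithSeqSgp (by omega) (t := t) (k := k) ?_, by push_cast; ring⟩
    zify [show 1 ≤ e by omega]
    exact hte

theorem memZ_arithSeqSgp_iff_of_lt (he : 2 ≤ e) (hcop : Nat.Coprime a d) {k t : ℤ}
    (ht0 : 0 ≤ t) (hta : t < a) :
    memZ (arithSeqSgp e a d) (k * a + t * d) ↔ t ≤ k * (e - 1) := by
  refine ⟨fun h => ?_, fun h => (memZ_arithSeqSgp_iff he).2 ⟨k, t, ht0, h, rfl⟩⟩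
  obtain ⟨k', t', ht'0, ht'e, heq⟩ := (memZ_arithSeqSgp_iff he).1 h
  obtain ⟨s, hs⟩ : (a : ℤ) ∣ t' - t := by
    refine (Nat.isCoprime_iff_coprime.mpr hcop).dvd_of_dvd_mul_right ⟨k - k', ?_⟩
    linear_combination -heq
  have hs0 : 0 ≤ s := by nlinarith
  have hk : k = k' + s * d := by
    refine mul_right_cancel₀ (show (a : ℤ) ≠ 0 by omega) ?_
    linear_combination heq + (d : ℤ) * hs
  have hsde : 0 ≤ s * d * ((e : ℤ) - 1) := by
    have : (0 : ℤ) ≤ e - 1 := by omega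
    positivity
  nlinarith

variable {q r : ℤ}

theorem mem_pseudoFrob_arithSeqSgp (he : 2 ≤ e) (hcop : Nat.Coprime a d)
    (hq : (a : ℤ) - 1 = q * (e - 1) + r) (hq0 : 0 ≤ q) (hre : r ≤ e - 1) {j : ℤ} (hj0 : 0 ≤ j)
    (hjr : j < r) : q * a + (a - 1 - j) * d ∈ pseudoFrob (arithSeqSgp e a d) := by
  refine mem_pseudoFrob_genBy (fun h => ?_) ?_
  · have := (memZ_arithSeqSgp_iff_of_lt he hcop (by nlinarith) (by linarith)).1 h
    linarith
  · rintro _ ⟨i, hi, rfl⟩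
    refine (memZ_arithSeqSgp_iff he).2 ?_
    rcases le_or_gt (i : ℤ) j with hij | hij
    · exact ⟨q + 1, a - 1 - j + i, by nlinarith, by nlinarith, by push_cast; ring⟩
    · exact ⟨q + 1 + d, i - j - 1, by linarith, by nlinarith, by push_cast; ring⟩

theorem exists_eq_of_mem_pseudoFrob_arithSeqSgp (he : 2 ≤ e) (ha : 0 < a)
    (hcop : Nat.Coprime a d) (hq : (a : ℤ) - 1 = q * (e - 1) + r) (hr0 : 0 < r)
    (hre : r ≤ e - 1) {f : ℤ} (hf : f ∈ pseudoFrob (arithSeqSgp e a d)) :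
    ∃ j : ℤ, 0 ≤ j ∧ j < r ∧ f = q * a + (a - 1 - j) * d := by
  have add_gen (i : ℤ) (hi0 : 0 ≤ i) (hie : i < e) :
      memZ (arithSeqSgp e a d) (f + a + i * d) := by
    lift i to ℕ using hi0
    simpa [add_assoc] using
      hf.2 (a + i * d) (AddSubmonoid.subset_closure ⟨i, by omega, rfl⟩) (by positivity)
  obtain ⟨k, t, ht0, hta, rfl⟩ := exists_eq_mul_add_mul_of_coprime ha hcop f
  have hkt : k * (e - 1) < t :=
    lt_of_not_ge fun h => hf.1 ((memZ_arithSeqSgp_iff_of_lt he hcop ht0 hta).2 h)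
  -- for `t ≤ a - e` the sum below is in canonical form, and the criterion would give `f ∈ H`
  have hat : a - e < t := by
    by_contra! h
    have hmem := add_gen (e - 1) (by linarith) (by linarith)
    rw [show k * a + t * d + a + (e - 1) * d = (k + 1) * a + (t + (e - 1)) * d by ring,
      memZ_arithSeqSgp_iff_of_lt he hcop (by linarith) (by linarith)] at hmem
    nlinarith
  have hak : a - 1 ≤ (k + 1) * (e - 1) := by
    have hmem := add_gen (a - 1 - t) (by linarith) (by linarith)
    rwa [show k * a + t * d + a + (a - 1 - t) * d = (k + 1) * a + (a - 1) * d by ring,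
      memZ_arithSeqSgp_iff_of_lt he hcop (by linarith) (by linarith)] at hmem
  have hkq : k = q := by
    have hE : (0 : ℤ) < e - 1 := by omega
    rcases lt_trichotomy k q with h | h | h
    · nlinarith [mul_le_mul_of_nonneg_right (show k + 1 ≤ q by omega) hE.le]
    · exact h
    · nlinarith [mul_le_mul_of_nonneg_right (show q + 1 ≤ k by omega) hE.le]
  subst hkq
  exact ⟨a - 1 - t, by linarith, by linarith, by ring⟩

theorem add_pseudoFrob_mem_antiCanIdeal_arithSeqSgp (he : 2 ≤ e) (ha : 0 < a)
    (hcop : Nat.Coprime a d) (hq : (a : ℤ) - 1 = q * (e - 1) + r) (hr0 : 0 < r)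
    (hre : r ≤ e - 1) {k t : ℤ} (hk : 1 ≤ k) (hte : t ≤ k * (e - 1)) :
    k * a + t * d + (q * a + (a - 1 - min t (r - 1)) * d) ∈ antiCanIdeal (arithSeqSgp e a d) := by
  rintro _ ⟨f, hf, h, hh, rfl⟩
  obtain ⟨j, hj0, hjr, rfl⟩ := exists_eq_of_mem_pseudoFrob_arithSeqSgp he ha hcop hq hr0 hre hf
  have hmem : memZ (arithSeqSgp e a d) (k * a + (t - min t (r - 1) + j) * d) := by
    refine (memZ_arithSeqSgp_iff he).2 ⟨k, _, by linarith [min_le_left t (r - 1)], ?_, rfl⟩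
    rcases min_cases t (r - 1) with ⟨hmin, -⟩ | ⟨hmin, -⟩ <;> rw [hmin]
    · nlinarith
    · linarith
  rw [show k * a + t * d + (q * a + (a - 1 - min t (r - 1)) * d) + (-(q * a + (a - 1 - j) * d) + h)
    = k * a + (t - min t (r - 1) + j) * d + h by ring]
  exact memZ_genBy_add hmem ⟨h, hh, rfl⟩

end arithSeqSgp

end NumSgp

/-- a numerical semigroup generated by an arithmetic sequence
`a, a+d, …, a+(e-1)d` with `gcd(a,d) = 1`, `2 < e ≤ a`, is nearly Gorenstein. -/
theorem stmt_2 (e a d : ℕ) (he : 2 < e) (hcop : Nat.Coprime a d) (hea : e ≤ a)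
    (H : Set ℕ) (hH : H = genBy {x : ℕ | ∃ i < e, x = a + i * d}) :
    NearlyGorenstein H := by
  subst hH
  have he2 : 2 ≤ e := he.le
  have ha : 0 < a := by omega
  obtain ⟨q, r, hq, hq0, hr0, hre⟩ :=
    exists_eq_mul_add_of_pos (n := (a : ℤ) - 1) (b := (e : ℤ) - 1) (by omega) (by omega)
  intro m hm hm0
  obtain ⟨k, t, ht0, hte, hmkt⟩ := (memZ_arithSeqSgp_iff he2).1 ⟨m, hm, rfl⟩
  have hk : 1 ≤ k := by
    rcases (show 0 ≤ k by nlinarith).eq_or_lt with rfl | hk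
    · obtain rfl : t = 0 := by linarith
      simp at hmkt
      omega
    · omega
  refine mem_trace_of_add_mem_antiCanIdeal zero_mem_genBy
    (mem_pseudoFrob_arithSeqSgp he2 hcop hq hq0 hre (le_min ht0 (by linarith))
      (min_lt_of_right_lt (sub_one_lt r))) ?_
  rw [hmkt]
  exact add_pseudoFrob_mem_antiCanIdeal_arithSeqSgp he2 ha hcop hq hr0 hre hk hte
end

section
/- Let H be a numerical semigroup minimally generated by n₁, n₂, n₃ which is not symmetric, and let a₁,a₂,a₃,b₁,b₂,b₃ be positive integers such that, setting cᵢ = aᵢ + bᵢ, one has c₁n₁ = b₂n₂ + a₃n₃, c₂n₂ = a₁n₁ + b₃n₃, c₃n₃ = b₁n₁ + a₂n₂, and each cᵢ is the smallest positive integer c with c·nᵢ in the submonoid generated by the other two of n₁,n₂,n₃. Then n₁ = a₂a₃ + b₂a₃ + b₂b₃, n₂ = a₁a₃ + a₁b₃ + b₁b₃, and n₃ = a₁a₂ + b₁a₂ + b₁b₂. -/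
open NumSgp Finset

/-! Write `cᵢ = aᵢ + bᵢ` and let `T` be the staircase `[0, c₂) × [0, c₃) ∖ [b₂, c₂) × [a₃, c₃)`,
which has `a₂a₃ + b₂a₃ + b₂b₃` points. The map `(λ, μ) ↦ λn₂ + μn₃ mod n₁` is a bijection from `T`
onto the residues mod `n₁`, so `n₁ = |T|`, and the relations then determine `n₂` and `n₃`.

Surjectivity: all large integers lie in `H`, so every residue is some `βn₂ + γn₃ mod n₁`; outside
`T` one of the three relations moves `(β, γ)` to a point of the same residue and smaller value.
Injectivity: two congruent points of `T` give `x n₂ + y n₃ = k n₁` with `|x| < c₂`, `|y| < c₃`.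
Whichever term has the lone sign is a multiple of its generator lying in the monoid generated by
the other two, so minimality of `c₂`, `c₃` forbids it unless that term is `k n₁`; in that case
`k ≥ c₁`, and subtracting the first relation leaves a contradiction with minimality of `c₂` or
`c₃`, because one point of `T` avoids the removed corner. -/

lemma mul_add_mul_mem_genBy_pair (x y u v : ℕ) : u * x + v * y ∈ genBy {x, y} :=
  (AddSubmonoid.mem_closure_pair x y _).mpr ⟨u, v, rfl⟩

lemma exists_eq_mul_add_mul_add_mul_of_mem_genBy {x y z m : ℕ} (h : m ∈ genBy {x, y, z}) :
    ∃ α β γ : ℕ, m = α * x + (β * y + γ * z) := by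
  rw [genBy, SetLike.mem_coe, ← Set.singleton_union, AddSubmonoid.closure_union,
    AddSubmonoid.mem_sup] at h
  obtain ⟨_, hx, _, hyz, rfl⟩ := h
  obtain ⟨α, rfl⟩ := AddSubmonoid.mem_closure_singleton.mp hx
  obtain ⟨β, γ, rfl⟩ := (AddSubmonoid.mem_closure_pair y z _).mp hyz
  exact ⟨α, β, γ, rfl⟩

lemma genBy_insert_zero (A : Set ℕ) : genBy (insert 0 A) = genBy A := by
  rw [genBy, genBy, AddSubmonoid.closure_insert_zero]

lemma pos_of_forall_ne_genBy_pair {n₁ n₂ n₃ : ℕ}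
    (h : ∀ x y : ℕ, genBy {n₁, n₂, n₃} ≠ genBy {x, y}) : 0 < n₁ ∧ 0 < n₂ ∧ 0 < n₃ := by
  refine ⟨Nat.pos_of_ne_zero ?_, Nat.pos_of_ne_zero ?_, Nat.pos_of_ne_zero ?_⟩ <;> rintro rfl
  · exact h n₂ n₃ (genBy_insert_zero _)
  · exact h n₁ n₃ (by rw [Set.insert_comm, genBy_insert_zero])
  · exact h n₁ n₂ (by rw [Set.pair_comm, Set.insert_comm, genBy_insert_zero, Set.pair_comm])

lemma le_of_mul_eq_mul_add_mul {n p q c₀ : ℕ}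
    (hmin : ∀ c : ℕ, 0 < c → c * n ∈ genBy {p, q} → c₀ ≤ c) {c u v : ℤ}
    (hc : 0 < c) (hu : 0 ≤ u) (hv : 0 ≤ v) (h : c * n = u * p + v * q) : c₀ ≤ c := by
  lift c to ℕ using hc.le
  lift u to ℕ using hu
  lift v to ℕ using hv
  norm_cast at hc h ⊢
  exact hmin c hc (h ▸ mul_add_mul_mem_genBy_pair p q u v)

lemma exists_mul_add_mul_modEq {n₁ n₂ n₃ : ℕ} (hfin : (genBy {n₁, n₂, n₃})ᶜ.Finite)
    (hn₁ : 0 < n₁) (r : ℕ) : ∃ β γ : ℕ, β * n₂ + γ * n₃ ≡ r [MOD n₁] := by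
  obtain ⟨B, hB⟩ := hfin.bddAbove
  have hmem : r + (B + 1) * n₁ ∈ genBy {n₁, n₂, n₃} := by
    by_contra h
    have := hB h
    nlinarith
  obtain ⟨α, β, γ, hα⟩ := exists_eq_mul_add_mul_add_mul_of_mem_genBy hmem
  refine ⟨β, γ, ?_⟩
  calc β * n₂ + γ * n₃ ≡ α * n₁ + (β * n₂ + γ * n₃) [MOD n₁] :=
        (Nat.mul_add_mod_self_right _ _ _).symm
    _ = r + (B + 1) * n₁ := hα.symm
    _ ≡ r [MOD n₁] := Nat.add_mul_mod_self_right _ _ _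

def staircase (a₂ b₂ a₃ b₃ : ℕ) : Finset (ℕ × ℕ) :=
  range (a₂ + b₂) ×ˢ range (a₃ + b₃) \ Ico b₂ (a₂ + b₂) ×ˢ Ico a₃ (a₃ + b₃)

lemma mem_staircase {a₂ b₂ a₃ b₃ : ℕ} {p : ℕ × ℕ} :
    p ∈ staircase a₂ b₂ a₃ b₃ ↔ p.1 < a₂ + b₂ ∧ p.2 < a₃ + b₃ ∧ (p.1 < b₂ ∨ p.2 < a₃) := by
  simp only [staircase, mem_sdiff, mem_product, mem_range, mem_Ico]
  omega

lemma card_staircase (a₂ b₂ a₃ b₃ : ℕ) :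
    #(staircase a₂ b₂ a₃ b₃) = a₂ * a₃ + b₂ * a₃ + b₂ * b₃ := by
  have hsub : Ico b₂ (a₂ + b₂) ×ˢ Ico a₃ (a₃ + b₃) ⊆ range (a₂ + b₂) ×ˢ range (a₃ + b₃) := by
    intro p
    simp only [mem_product, mem_range, mem_Ico]
    omega
  rw [staircase, card_sdiff_of_subset hsub, card_product, card_product, card_range, card_range,
    Nat.card_Ico, Nat.card_Ico, Nat.add_sub_cancel, Nat.add_sub_cancel_left]
  exact Nat.sub_eq_of_eq_add (by ring)

section Staircase

variable {n₁ n₂ n₃ a₁ a₂ a₃ b₁ b₂ b₃ : ℕ}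

lemma exists_descent_of_not_mem_staircase (ha₁ : 0 < a₁) (hb₁ : 0 < b₁)
    (h1 : (a₁ + b₁) * n₁ = b₂ * n₂ + a₃ * n₃)
    (h2 : (a₂ + b₂) * n₂ = a₁ * n₁ + b₃ * n₃)
    (h3 : (a₃ + b₃) * n₃ = b₁ * n₁ + a₂ * n₂) {l m : ℕ} (h : (l, m) ∉ staircase a₂ b₂ a₃ b₃) :
    ∃ l' m' k : ℕ, 0 < k ∧ l * n₂ + m * n₃ = l' * n₂ + m' * n₃ + k * n₁ := by
  rw [mem_staircase] at h
  rcases le_or_gt (a₂ + b₂) l with hl | hl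
  · obtain ⟨l, rfl⟩ := Nat.exists_eq_add_of_le hl
    exact ⟨l, m + b₃, a₁, ha₁, by linear_combination h2⟩
  rcases le_or_gt (a₃ + b₃) m with hm | hm
  · obtain ⟨m, rfl⟩ := Nat.exists_eq_add_of_le hm
    exact ⟨l + a₂, m, b₁, hb₁, by linear_combination h3⟩
  obtain ⟨l, rfl⟩ := Nat.exists_eq_add_of_le (show b₂ ≤ l by omega)
  obtain ⟨m, rfl⟩ := Nat.exists_eq_add_of_le (show a₃ ≤ m by omega)
  exact ⟨l, m, a₁ + b₁, by omega, by linear_combination h1.symm⟩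

lemma exists_mem_staircase_modEq (hn₁ : 0 < n₁) (ha₁ : 0 < a₁) (hb₁ : 0 < b₁)
    (h1 : (a₁ + b₁) * n₁ = b₂ * n₂ + a₃ * n₃)
    (h2 : (a₂ + b₂) * n₂ = a₁ * n₁ + b₃ * n₃)
    (h3 : (a₃ + b₃) * n₃ = b₁ * n₁ + a₂ * n₂) (l m : ℕ) :
    ∃ p ∈ staircase a₂ b₂ a₃ b₃, p.1 * n₂ + p.2 * n₃ ≡ l * n₂ + m * n₃ [MOD n₁] := by
  generalize hv : l * n₂ + m * n₃ = v
  induction v using Nat.strong_induction_on generalizing l m with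
  | _ v ih =>
    by_cases hT : (l, m) ∈ staircase a₂ b₂ a₃ b₃
    · exact ⟨(l, m), hT, hv ▸ rfl⟩
    obtain ⟨l', m', k, hk, heq⟩ := exists_descent_of_not_mem_staircase ha₁ hb₁ h1 h2 h3 hT
    have hlt : l' * n₂ + m' * n₃ < v := by
      rw [← hv, heq]
      exact Nat.lt_add_of_pos_right (Nat.mul_pos hk hn₁)
    obtain ⟨p, hp, hpv⟩ := ih _ hlt l' m' rfl
    exact ⟨p, hp, hpv.trans (hv ▸ heq ▸ (Nat.add_mul_mod_self_right _ _ _).symm)⟩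

lemma eq_zero_of_mul_add_mul_eq (hn₁ : 0 < n₁) (hn₂ : 0 < n₂) (hn₃ : 0 < n₃)
    (h1 : (a₁ + b₁) * n₁ = b₂ * n₂ + a₃ * n₃)
    (hmin1 : ∀ c : ℕ, 0 < c → c * n₁ ∈ genBy {n₂, n₃} → a₁ + b₁ ≤ c)
    (hmin2 : ∀ c : ℕ, 0 < c → c * n₂ ∈ genBy {n₁, n₃} → a₂ + b₂ ≤ c)
    (hmin3 : ∀ c : ℕ, 0 < c → c * n₃ ∈ genBy {n₁, n₂} → a₃ + b₃ ≤ c)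
    {x y k : ℤ} (h : x * n₂ + y * n₃ = k * n₁) (hx₀ : 0 ≤ x) (hx : x < a₂ + b₂)
    (hy : |y| < a₃ + b₃) (hcorner : 0 ≤ y → x < b₂ ∨ y < a₃) : x = 0 ∧ y = 0 := by
  have hn₁' : (0 : ℤ) < n₁ := by exact_mod_cast hn₁
  have hn₂' : (0 : ℤ) < n₂ := by exact_mod_cast hn₂
  have hn₃' : (0 : ℤ) < n₃ := by exact_mod_cast hn₃
  rw [abs_lt] at hy
  rcases lt_or_ge y 0 with hy₀ | hy₀
  · exfalso
    rcases lt_or_ge k 0 with hk | hk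
    · have := le_of_mul_eq_mul_add_mul hmin3 (by linarith) (by linarith) hx₀
        (by linear_combination -h : -y * n₃ = -k * n₁ + x * n₂)
      push_cast at this
      linarith
    · have hx₁ : 0 < x := by nlinarith
      have := le_of_mul_eq_mul_add_mul hmin2 hx₁ hk (by linarith)
        (by linear_combination h : x * n₂ = k * n₁ + -y * n₃)
      push_cast at this
      linarith
  rcases le_or_gt k 0 with hk | hk
  · constructor <;> nlinarith
  exfalso
  have hc₁ := le_of_mul_eq_mul_add_mul hmin1 hk hx₀ hy₀ h.symm
  have h1' : ((a₁ : ℤ) + b₁) * n₁ = b₂ * n₂ + a₃ * n₃ := by exact_mod_cast h1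
  push_cast at hc₁
  rcases hcorner hy₀ with hxb | hya
  · have heq : (y - a₃) * n₃ = (k - (a₁ + b₁)) * n₁ + (b₂ - x) * n₂ := by
      linear_combination h1' + h
    have := le_of_mul_eq_mul_add_mul hmin3 (by nlinarith) (by linarith) (by linarith) heq
    push_cast at this
    linarith
  · have heq : (x - b₂) * n₂ = (k - (a₁ + b₁)) * n₁ + (a₃ - y) * n₃ := by
      linear_combination h1' + h
    have := le_of_mul_eq_mul_add_mul hmin2 (by nlinarith) (by linarith) (by linarith) heq
    push_cast at this
    linarith

lemma injOn_staircase (hn₁ : 0 < n₁) (hn₂ : 0 < n₂) (hn₃ : 0 < n₃)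
    (h1 : (a₁ + b₁) * n₁ = b₂ * n₂ + a₃ * n₃)
    (hmin1 : ∀ c : ℕ, 0 < c → c * n₁ ∈ genBy {n₂, n₃} → a₁ + b₁ ≤ c)
    (hmin2 : ∀ c : ℕ, 0 < c → c * n₂ ∈ genBy {n₁, n₃} → a₂ + b₂ ≤ c)
    (hmin3 : ∀ c : ℕ, 0 < c → c * n₃ ∈ genBy {n₁, n₂} → a₃ + b₃ ≤ c) :
    Set.InjOn (fun p : ℕ × ℕ => (p.1 * n₂ + p.2 * n₃) % n₁) (staircase a₂ b₂ a₃ b₃) := by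
  suffices key : ∀ p ∈ staircase a₂ b₂ a₃ b₃, ∀ q ∈ staircase a₂ b₂ a₃ b₃, q.1 ≤ p.1 →
      q.1 * n₂ + q.2 * n₃ ≡ p.1 * n₂ + p.2 * n₃ [MOD n₁] → p = q by
    intro p hp q hq hpq
    rcases le_total q.1 p.1 with h | h
    · exact key p hp q hq h hpq.symm
    · exact (key q hq p hp h hpq).symm
  rintro ⟨l, m⟩ hp ⟨l', m'⟩ hq (hl : l' ≤ l) hmod
  rw [mem_staircase] at hp hq
  obtain ⟨k, hk⟩ := Nat.modEq_iff_dvd.mp hmod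
  push_cast at hk
  obtain ⟨hx, hy⟩ := eq_zero_of_mul_add_mul_eq hn₁ hn₂ hn₃ h1 hmin1 hmin2 hmin3
    (x := l - l') (y := m - m') (k := k) (by linear_combination hk) (by omega) (by omega)
    (by rw [abs_lt]; omega) (by omega)
  ext <;> simp only <;> omega

lemma eq_card_staircase (hfin : (genBy {n₁, n₂, n₃})ᶜ.Finite)
    (hn₁ : 0 < n₁) (hn₂ : 0 < n₂) (hn₃ : 0 < n₃) (ha₁ : 0 < a₁) (hb₁ : 0 < b₁)
    (h1 : (a₁ + b₁) * n₁ = b₂ * n₂ + a₃ * n₃)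
    (h2 : (a₂ + b₂) * n₂ = a₁ * n₁ + b₃ * n₃)
    (h3 : (a₃ + b₃) * n₃ = b₁ * n₁ + a₂ * n₂)
    (hmin1 : ∀ c : ℕ, 0 < c → c * n₁ ∈ genBy {n₂, n₃} → a₁ + b₁ ≤ c)
    (hmin2 : ∀ c : ℕ, 0 < c → c * n₂ ∈ genBy {n₁, n₃} → a₂ + b₂ ≤ c)
    (hmin3 : ∀ c : ℕ, 0 < c → c * n₃ ∈ genBy {n₁, n₂} → a₃ + b₃ ≤ c) :
    n₁ = #(staircase a₂ b₂ a₃ b₃) := by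
  have hmaps : Set.MapsTo (fun p : ℕ × ℕ => (p.1 * n₂ + p.2 * n₃) % n₁)
      (staircase a₂ b₂ a₃ b₃) (range n₁) :=
    fun p _ => mem_range.mpr (Nat.mod_lt _ hn₁)
  have hsurj : Set.SurjOn (fun p : ℕ × ℕ => (p.1 * n₂ + p.2 * n₃) % n₁)
      (staircase a₂ b₂ a₃ b₃) (range n₁) := by
    intro r hr
    obtain ⟨β, γ, hβγ⟩ := exists_mul_add_mul_modEq hfin hn₁ r
    obtain ⟨p, hp, hpβγ⟩ := exists_mem_staircase_modEq hn₁ ha₁ hb₁ h1 h2 h3 β γ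
    exact ⟨p, hp, Eq.trans (hpβγ.trans hβγ) (Nat.mod_eq_of_lt (mem_range.mp hr))⟩
  calc n₁ = #(range n₁) := (card_range n₁).symm
    _ = #(staircase a₂ b₂ a₃ b₃) := (card_nbij _ hmaps
      (injOn_staircase hn₁ hn₂ hn₃ h1 hmin1 hmin2 hmin3) hsurj).symm

lemma eq_of_relations_of_eq (hn₁ : 0 < n₁)
    (h2 : (a₂ + b₂) * n₂ = a₁ * n₁ + b₃ * n₃)
    (h3 : (a₃ + b₃) * n₃ = b₁ * n₁ + a₂ * n₂) (hN₁ : n₁ = a₂ * a₃ + b₂ * a₃ + b₂ * b₃) :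
    n₂ = a₁ * a₃ + a₁ * b₃ + b₁ * b₃ ∧ n₃ = a₁ * a₂ + b₁ * a₂ + b₁ * b₂ := by
  constructor <;> refine Nat.eq_of_mul_eq_mul_left hn₁ ?_
  · linear_combination n₂ * hN₁ + (a₃ + b₃) * h2 + b₃ * h3
  · linear_combination n₃ * hN₁ + a₂ * h2 + (a₂ + b₂) * h3

end Staircase

theorem stmt_7_general (H : Set ℕ) (n₁ n₂ n₃ : ℕ)
    (hgen : H = genBy {n₁, n₂, n₃}) (hnum : IsNumSgp H)
    (hmin : ∀ x y : ℕ, H ≠ genBy {x, y})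
    (a₁ a₂ a₃ b₁ b₂ b₃ : ℕ)
    (ha₁ : 0 < a₁)
    (hb₁ : 0 < b₁)
    (h1 : (a₁ + b₁) * n₁ = b₂ * n₂ + a₃ * n₃)
    (h2 : (a₂ + b₂) * n₂ = a₁ * n₁ + b₃ * n₃)
    (h3 : (a₃ + b₃) * n₃ = b₁ * n₁ + a₂ * n₂)
    (hmin1 : ∀ c : ℕ, 0 < c → c * n₁ ∈ genBy {n₂, n₃} → a₁ + b₁ ≤ c)
    (hmin2 : ∀ c : ℕ, 0 < c → c * n₂ ∈ genBy {n₁, n₃} → a₂ + b₂ ≤ c)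
    (hmin3 : ∀ c : ℕ, 0 < c → c * n₃ ∈ genBy {n₁, n₂} → a₃ + b₃ ≤ c) :
    n₁ = a₂ * a₃ + b₂ * a₃ + b₂ * b₃ ∧
    n₂ = a₁ * a₃ + a₁ * b₃ + b₁ * b₃ ∧
    n₃ = a₁ * a₂ + b₁ * a₂ + b₁ * b₂ := by
  subst hgen
  obtain ⟨hn₁, hn₂, hn₃⟩ := pos_of_forall_ne_genBy_pair hmin
  have hN₁ : n₁ = a₂ * a₃ + b₂ * a₃ + b₂ * b₃ :=
    (eq_card_staircase hnum.2.2 hn₁ hn₂ hn₃ ha₁ hb₁ h1 h2 h3 hmin1 hmin2 hmin3).trans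
      (card_staircase a₂ b₂ a₃ b₃)
  exact ⟨hN₁, eq_of_relations_of_eq hn₁ h2 h3 hN₁⟩

/-- structure constants of a non-symmetric 3-generated numerical
semigroup recover the generators. -/
theorem stmt_7 (H : Set ℕ) (n₁ n₂ n₃ : ℕ)
    (hgen : H = genBy {n₁, n₂, n₃}) (hnum : IsNumSgp H)
    (hmin : ∀ x y : ℕ, H ≠ genBy {x, y})
    (hns : ¬ IsSymmetric H)
    (a₁ a₂ a₃ b₁ b₂ b₃ : ℕ)
    (ha₁ : 0 < a₁) (ha₂ : 0 < a₂) (ha₃ : 0 < a₃)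
    (hb₁ : 0 < b₁) (hb₂ : 0 < b₂) (hb₃ : 0 < b₃)
    (h1 : (a₁ + b₁) * n₁ = b₂ * n₂ + a₃ * n₃)
    (h2 : (a₂ + b₂) * n₂ = a₁ * n₁ + b₃ * n₃)
    (h3 : (a₃ + b₃) * n₃ = b₁ * n₁ + a₂ * n₂)
    (hmin1 : ∀ c : ℕ, 0 < c → c * n₁ ∈ genBy {n₂, n₃} → a₁ + b₁ ≤ c)
    (hmin2 : ∀ c : ℕ, 0 < c → c * n₂ ∈ genBy {n₁, n₃} → a₂ + b₂ ≤ c)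
    (hmin3 : ∀ c : ℕ, 0 < c → c * n₃ ∈ genBy {n₁, n₂} → a₃ + b₃ ≤ c) :
    n₁ = a₂ * a₃ + b₂ * a₃ + b₂ * b₃ ∧
    n₂ = a₁ * a₃ + a₁ * b₃ + b₁ * b₃ ∧
    n₃ = a₁ * a₂ + b₁ * a₂ + b₁ * b₂ :=
  stmt_7_general H n₁ n₂ n₃ hgen hnum hmin a₁ a₂ a₃ b₁ b₂ b₃ ha₁ hb₁ h1 h2 h3 hmin1 hmin2 hmin3
end

section
/- Let H be a numerical semigroup minimally generated by n₁, n₂, n₃ which is not symmetric, and let a₁,a₂,a₃,b₁,b₂,b₃ be positive integers such that, setting cᵢ = aᵢ + bᵢ, one has c₁n₁ = b₂n₂ + a₃n₃, c₂n₂ = a₁n₁ + b₃n₃, c₃n₃ = b₁n₁ + a₂n₂, and each cᵢ is the smallest positive integer c with c·nᵢ in the submonoid generated by the other two of n₁,n₂,n₃. Set dᵢ = min{aᵢ, bᵢ} for i = 1,2,3. Then tr(H) = (d₁n₁ + H) ∪ (d₂n₂ + H) ∪ (d₃n₃ + H) and res(H) = d₁·d₂·d₃. -/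
open NumSgp

/-!
Write `cᵢ = aᵢ + bᵢ` and let `r₁ = (c₁, -b₂, -a₃)`, `r₂ = (-a₁, c₂, -b₃)`, `r₃ = (-b₁, -a₂, c₃)`
be the rows of Herzog's matrix. Every relation `w` (i.e. `∑ wᵢ nᵢ = 0`) is a combination
`s r₁ + t r₂ + u r₃` with `s, t, u ≥ 0`: by descent on `∑ |wᵢ| nᵢ`, since the minimality of `cᵢ`
lets one subtract (or add) a row from a relation with a single positive (or negative) entry.
As `r₁ + r₂ + r₃ = 0`, one of `s, t, u` may be taken to be `0`; the coordinate `k` left out by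
the other two rows then drops by at least `min(aₖ, bₖ)` times their total coefficient.

This decides membership in `H` of everything needed. The Apéry set of `n₁` is `{u₂ n₂ + u₃ n₃}`
over an L-shaped region of exponents, whose two corners give `PF(H) = {F₁, F₂}` with
`F₂ - F₁ = D = b₂ n₂ - a₁ n₁`. For a semigroup of type two, `tr(H)` consists of the `z ∈ H` with
`z - D ∈ H` or `z + D ∈ H`; `∑ xᵢ nᵢ` is such a `z` exactly when some `xᵢ ≥ dᵢ = min(aᵢ, bᵢ)`.
The elements with all `xᵢ < dᵢ` have no other representation, so `H ∖ tr(H)` has `d₁ d₂ d₃`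
elements.
-/

namespace NumSgp

theorem mem_genBy_pair {m k x : ℕ} : x ∈ genBy {m, k} ↔ ∃ y z : ℕ, y * m + z * k = x := by
  simp [genBy, AddSubmonoid.mem_closure_pair, smul_eq_mul]

theorem mem_genBy_triple {n₁ n₂ n₃ x : ℕ} :
    x ∈ genBy {n₁, n₂, n₃} ↔ ∃ y₁ y₂ y₃ : ℕ, y₁ * n₁ + y₂ * n₂ + y₃ * n₃ = x := by
  simp only [genBy, SetLike.mem_coe]
  rw [← Set.singleton_union, AddSubmonoid.closure_union, AddSubmonoid.mem_sup]
  simp only [AddSubmonoid.mem_closure_singleton, AddSubmonoid.mem_closure_pair, smul_eq_mul]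
  constructor
  · rintro ⟨_, ⟨y₁, rfl⟩, _, ⟨y₂, y₃, rfl⟩, rfl⟩
    exact ⟨y₁, y₂, y₃, by ring⟩
  · rintro ⟨y₁, y₂, y₃, rfl⟩
    exact ⟨_, ⟨y₁, rfl⟩, _, ⟨y₂, y₃, rfl⟩, by ring⟩

theorem memZ_genBy_triple {n₁ n₂ n₃ : ℕ} {z : ℤ} :
    memZ (genBy {n₁, n₂, n₃}) z ↔
      ∃ y₁ y₂ y₃ : ℕ, (y₁ * n₁ + y₂ * n₂ + y₃ * n₃ : ℤ) = z := by
  simp only [memZ, mem_genBy_triple]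
  constructor
  · rintro ⟨_, ⟨y₁, y₂, y₃, rfl⟩, rfl⟩
    exact ⟨y₁, y₂, y₃, by push_cast; ring⟩
  · rintro ⟨y₁, y₂, y₃, rfl⟩
    exact ⟨_, ⟨y₁, y₂, y₃, rfl⟩, by push_cast; ring⟩

theorem memZ_add {A : Set ℕ} {x y : ℤ} (hx : memZ (genBy A) x) (hy : memZ (genBy A) y) :
    memZ (genBy A) (x + y) := by
  obtain ⟨m, hm, rfl⟩ := hx
  obtain ⟨k, hk, rfl⟩ := hy
  exact ⟨m + k, (AddSubmonoid.closure A).add_mem hm hk, by push_cast; rfl⟩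

theorem mem_antiCanIdeal_iff {A : Set ℕ} {x : ℤ} :
    x ∈ antiCanIdeal (genBy A) ↔ ∀ f ∈ pseudoFrob (genBy A), memZ (genBy A) (x - f) := by
  constructor
  · intro hx f hf
    simpa [sub_eq_add_neg] using
      hx (-f + (0 : ℕ)) ⟨f, hf, 0, (AddSubmonoid.closure A).zero_mem, rfl⟩
  · rintro hx _ ⟨f, hf, h, hh, rfl⟩
    simpa [sub_eq_add_neg, add_assoc] using memZ_add (hx f hf) ⟨h, hh, rfl⟩

theorem mem_trace_iff {A : Set ℕ} {z : ℤ} :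
    z ∈ trace (genBy A) ↔
      ∃ f ∈ pseudoFrob (genBy A), ∀ g ∈ pseudoFrob (genBy A), memZ (genBy A) (z + f - g) := by
  constructor
  · rintro ⟨_, ⟨f, hf, h, hh, rfl⟩, x, hx, rfl⟩
    refine ⟨f, hf, fun g hg => ?_⟩
    convert memZ_add (mem_antiCanIdeal_iff.1 hx g hg) ⟨h, hh, rfl⟩ using 1
    ring
  · rintro ⟨f, hf, hz⟩
    exact ⟨-f + (0 : ℕ), ⟨f, hf, 0, (AddSubmonoid.closure A).zero_mem, rfl⟩, z + f,
      mem_antiCanIdeal_iff.2 fun g hg => by simpa using hz g hg, by push_cast; ring⟩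

theorem mem_trace_iff_of_pseudoFrob_eq_pair {A : Set ℕ} {f g z : ℤ}
    (hPF : pseudoFrob (genBy A) = {f, g}) :
    z ∈ trace (genBy A) ↔
      memZ (genBy A) z ∧ (memZ (genBy A) (z - (g - f)) ∨ memZ (genBy A) (z + (g - f))) := by
  simp only [mem_trace_iff, hPF, Set.mem_insert_iff, Set.mem_singleton_iff, exists_eq_or_imp,
    forall_eq_or_imp, forall_eq, exists_eq_left, add_sub_cancel_right]
  constructor
  · rintro (⟨hz, h⟩ | ⟨h, hz⟩)
    · exact ⟨hz, .inl (by convert h using 1; ring)⟩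
    · exact ⟨hz, .inr (by convert h using 1; ring)⟩
  · rintro ⟨hz, h | h⟩
    · exact .inl ⟨hz, by convert h using 1; ring⟩
    · exact .inr ⟨by convert h using 1; ring, hz⟩

theorem mem_pseudoFrob_genBy_of_add_mem {A : Set ℕ} {f : ℤ} (hf : ¬ memZ (genBy A) f)
    (hA : ∀ a ∈ A, a ≠ 0 → memZ (genBy A) (f + a)) : f ∈ pseudoFrob (genBy A) := by
  refine ⟨hf, fun m hm => ?_⟩
  induction hm using AddSubmonoid.closure_induction with
  | mem a ha => exact hA a ha
  | zero => exact fun h => absurd rfl h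
  | add x y hx hy ihx ihy =>
    intro hxy
    rcases eq_or_ne x 0 with rfl | hx0
    · simpa using ihy (by simpa using hxy)
    · rw [Nat.cast_add, ← add_assoc]
      exact memZ_add (ihx hx0) ⟨y, hy, rfl⟩


def translateZ (k : ℕ) (H : Set ℕ) : Set ℤ := {z | ∃ h ∈ H, z = ((k + h : ℕ) : ℤ)}

theorem mem_translateZ_of_not_lt {n₁ n₂ n₃ d₁ d₂ d₃ y₁ y₂ y₃ : ℕ}
    (h : ¬ (y₁ < d₁ ∧ y₂ < d₂ ∧ y₃ < d₃)) :
    ((y₁ * n₁ + y₂ * n₂ + y₃ * n₃ : ℕ) : ℤ) ∈ translateZ (d₁ * n₁) (genBy {n₁, n₂, n₃}) ∪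
      translateZ (d₂ * n₂) (genBy {n₁, n₂, n₃}) ∪ translateZ (d₃ * n₃) (genBy {n₁, n₂, n₃}) := by
  by_cases h₁ : d₁ ≤ y₁
  · obtain ⟨k, rfl⟩ := Nat.exists_eq_add_of_le h₁
    exact .inl (.inl ⟨_, mem_genBy_triple.2 ⟨k, y₂, y₃, rfl⟩, by push_cast; ring⟩)
  by_cases h₂ : d₂ ≤ y₂
  · obtain ⟨k, rfl⟩ := Nat.exists_eq_add_of_le h₂
    exact .inl (.inr ⟨_, mem_genBy_triple.2 ⟨y₁, k, y₃, rfl⟩, by push_cast; ring⟩)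
  · obtain ⟨k, rfl⟩ := Nat.exists_eq_add_of_le (by omega : d₃ ≤ y₃)
    exact .inr ⟨_, mem_genBy_triple.2 ⟨y₁, y₂, k, rfl⟩, by push_cast; ring⟩

theorem memZ_min_mul_sub_or_add {A : Set ℕ} {a b n p q : ℕ} {D : ℤ} (hp : p ∈ genBy A)
    (hq : q ∈ genBy A) (hb : D = b * n - p) (ha : D = q - a * n) :
    memZ (genBy A) ((min a b * n : ℕ) - D) ∨ memZ (genBy A) ((min a b * n : ℕ) + D) := by
  rcases le_total a b with h | h
  · exact .inr ⟨q, hq, by rw [min_eq_left h, ha]; push_cast; ring⟩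
  · exact .inl ⟨p, hp, by rw [min_eq_right h, hb]; push_cast; ring⟩

/-- Herzog's relations of a non-symmetric `⟨n₁, n₂, n₃⟩`, with indices read cyclically:
`cᵢ nᵢ = bᵢ₊₁ nᵢ₊₁ + aᵢ₊₂ nᵢ₊₂` where `cᵢ = aᵢ + bᵢ` is minimal. -/
structure HerzogRelations (n₁ n₂ n₃ a₁ a₂ a₃ b₁ b₂ b₃ : ℕ) : Prop where
  a₁_pos : 0 < a₁
  a₂_pos : 0 < a₂
  a₃_pos : 0 < a₃
  b₁_pos : 0 < b₁
  b₂_pos : 0 < b₂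
  b₃_pos : 0 < b₃
  rel₁ : (a₁ + b₁) * n₁ = b₂ * n₂ + a₃ * n₃
  rel₂ : (a₂ + b₂) * n₂ = b₃ * n₃ + a₁ * n₁
  rel₃ : (a₃ + b₃) * n₃ = b₁ * n₁ + a₂ * n₂
  min₁ : ∀ c : ℕ, 0 < c → c * n₁ ∈ genBy {n₂, n₃} → a₁ + b₁ ≤ c
  min₂ : ∀ c : ℕ, 0 < c → c * n₂ ∈ genBy {n₃, n₁} → a₂ + b₂ ≤ c
  min₃ : ∀ c : ℕ, 0 < c → c * n₃ ∈ genBy {n₁, n₂} → a₃ + b₃ ≤ c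

/-- `w = s r₁ + t r₂ + u r₃` with `s, t, u ≥ 0`, where `r₁ = (c₁, -b₂, -a₃)`, `r₂ = (-a₁, c₂, -b₃)`,
`r₃ = (-b₁, -a₂, c₃)` are the rows of Herzog's matrix. As `r₁ + r₂ + r₃ = 0`, this cone is the
lattice spanned by the rows. -/
def relCone (a₁ a₂ a₃ b₁ b₂ b₃ : ℕ) (w₁ w₂ w₃ : ℤ) : Prop :=
  ∃ s t u : ℤ, 0 ≤ s ∧ 0 ≤ t ∧ 0 ≤ u ∧
    w₁ = s * (a₁ + b₁) - t * a₁ - u * b₁ ∧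
    w₂ = t * (a₂ + b₂) - u * a₂ - s * b₂ ∧
    w₃ = u * (a₃ + b₃) - s * a₃ - t * b₃

theorem relCone.neg {a₁ a₂ a₃ b₁ b₂ b₃ : ℕ} {w₁ w₂ w₃ : ℤ}
    (h : relCone a₁ a₂ a₃ b₁ b₂ b₃ (-w₁) (-w₂) (-w₃)) : relCone a₁ a₂ a₃ b₁ b₂ b₃ w₁ w₂ w₃ := by
  obtain ⟨s, t, u, hs, ht, hu, e₁, e₂, e₃⟩ := h
  exact ⟨t + u, s + u, s + t, by positivity, by positivity, by positivity,
    by linear_combination -e₁, by linear_combination -e₂, by linear_combination -e₃⟩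

theorem relCone.exists_coeff_eq_zero {a₁ a₂ a₃ b₁ b₂ b₃ : ℕ} {w₁ w₂ w₃ : ℤ}
    (h : relCone a₁ a₂ a₃ b₁ b₂ b₃ w₁ w₂ w₃) :
    ∃ s t u : ℤ, 0 ≤ s ∧ 0 ≤ t ∧ 0 ≤ u ∧ (s = 0 ∨ t = 0 ∨ u = 0) ∧
      w₁ = s * (a₁ + b₁) - t * a₁ - u * b₁ ∧
      w₂ = t * (a₂ + b₂) - u * a₂ - s * b₂ ∧
      w₃ = u * (a₃ + b₃) - s * a₃ - t * b₃ := by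
  obtain ⟨s, t, u, -, -, -, e₁, e₂, e₃⟩ := h
  set m := min s (min t u)
  exact ⟨s - m, t - m, u - m, by omega, by omega, by omega, by omega,
    by linear_combination e₁, by linear_combination e₂, by linear_combination e₃⟩

def weight (n₁ n₂ n₃ : ℕ) (w₁ w₂ w₃ : ℤ) : ℤ := |w₁| * n₁ + |w₂| * n₂ + |w₃| * n₃

theorem weight_nonneg (n₁ n₂ n₃ : ℕ) (w₁ w₂ w₃ : ℤ) : 0 ≤ weight n₁ n₂ n₃ w₁ w₂ w₃ := by
  unfold weight; positivity

theorem weight_neg (n₁ n₂ n₃ : ℕ) (w₁ w₂ w₃ : ℤ) :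
    weight n₁ n₂ n₃ (-w₁) (-w₂) (-w₃) = weight n₁ n₂ n₃ w₁ w₂ w₃ := by
  simp only [weight, abs_neg]

theorem weight_sub_row_lt {n₁ n₂ n₃ c b a : ℕ} (hb : 0 < b) (ha : 0 < a)
    (hn₁ : 0 < n₁) (hn₂ : 0 < n₂) (hn₃ : 0 < n₃) (hrel : c * n₁ = b * n₂ + a * n₃)
    (hmin : ∀ k : ℕ, 0 < k → k * n₁ ∈ genBy {n₂, n₃} → c ≤ k)
    {w₁ w₂ w₃ : ℤ} (hw : w₁ * n₁ + w₂ * n₂ + w₃ * n₃ = 0)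
    (h₁ : 0 < w₁) (h₂ : w₂ ≤ 0) (h₃ : w₃ ≤ 0) :
    weight n₁ n₂ n₃ (w₁ - c) (w₂ + b) (w₃ + a) < weight n₁ n₂ n₃ w₁ w₂ w₃ := by
  unfold weight
  lift w₁ to ℕ using h₁.le with k
  obtain ⟨l, rfl⟩ := Int.exists_eq_neg_ofNat h₂
  obtain ⟨m, rfl⟩ := Int.exists_eq_neg_ofNat h₃
  have hk : k * n₁ = l * n₂ + m * n₃ := by
    have : (k * n₁ : ℤ) = l * n₂ + m * n₃ := by linear_combination hw
    exact_mod_cast this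
  have hck : c ≤ k := hmin k (by exact_mod_cast h₁) (mem_genBy_pair.2 ⟨l, m, hk.symm⟩)
  have hrelZ : (c * n₁ : ℤ) = b * n₂ + a * n₃ := by exact_mod_cast hrel
  have hlm : 0 < l ∨ 0 < m := by
    by_contra! h
    obtain ⟨rfl, rfl⟩ : l = 0 ∧ m = 0 := by omega
    simp only [zero_mul, add_zero, mul_eq_zero] at hk
    omega
  have e₂ : |-(l : ℤ) + b| * n₂ ≤ (l + b) * n₂ :=
    mul_le_mul_of_nonneg_right (abs_le.2 ⟨by linarith, by linarith⟩) (by positivity)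
  have e₃ : |-(m : ℤ) + a| * n₃ ≤ (m + a) * n₃ :=
    mul_le_mul_of_nonneg_right (abs_le.2 ⟨by linarith, by linarith⟩) (by positivity)
  have strict : |-(l : ℤ) + b| * n₂ < (l + b) * n₂ ∨ |-(m : ℤ) + a| * n₃ < (m + a) * n₃ := by
    rcases hlm with hl | hm
    · exact .inl (mul_lt_mul_of_pos_right (abs_lt.2 ⟨by linarith, by linarith⟩) (by positivity))
    · exact .inr (mul_lt_mul_of_pos_right (abs_lt.2 ⟨by linarith, by linarith⟩) (by positivity))
  rw [abs_of_nonneg (by omega : (0 : ℤ) ≤ k - c), abs_neg, abs_neg, Nat.abs_cast, Nat.abs_cast,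
    Nat.abs_cast]
  rcases strict with h | h <;> linarith

def ExactlyOnePos (w₁ w₂ w₃ : ℤ) : Prop :=
  (0 < w₁ ∧ w₂ ≤ 0 ∧ w₃ ≤ 0) ∨ (0 < w₂ ∧ w₃ ≤ 0 ∧ w₁ ≤ 0) ∨ (0 < w₃ ∧ w₁ ≤ 0 ∧ w₂ ≤ 0)

theorem exactlyOnePos_or_neg {n₁ n₂ n₃ : ℕ} (hn₁ : 0 < n₁) (hn₂ : 0 < n₂) (hn₃ : 0 < n₃)
    {w₁ w₂ w₃ : ℤ} (hw : w₁ * n₁ + w₂ * n₂ + w₃ * n₃ = 0) (h0 : ¬ (w₁ = 0 ∧ w₂ = 0 ∧ w₃ = 0)) :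
    ExactlyOnePos w₁ w₂ w₃ ∨ ExactlyOnePos (-w₁) (-w₂) (-w₃) := by
  -- once the signs of the products `wᵢ nᵢ` are recorded, the claim is linear
  have sign : ∀ {x : ℤ} {n : ℕ}, 0 < n →
      (0 < x → 0 < x * n) ∧ (x < 0 → x * n < 0) ∧ (x = 0 → x * n = 0) := fun hn =>
    ⟨fun h => mul_pos h (by exact_mod_cast hn),
      fun h => mul_neg_of_neg_of_pos h (by exact_mod_cast hn), fun h => by rw [h, zero_mul]⟩
  have s₁ := sign (x := w₁) hn₁
  have s₂ := sign (x := w₂) hn₂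
  have s₃ := sign (x := w₃) hn₃
  generalize w₁ * n₁ = p₁ at *
  generalize w₂ * n₂ = p₂ at *
  generalize w₃ * n₃ = p₃ at *
  unfold ExactlyOnePos
  omega

/-- `u₂ n₂ + u₃ n₃` lies in the Apéry set of `n₁`: the exponents fill an L-shaped region. -/
def IsAperyExponent (a₂ a₃ b₂ b₃ u₂ u₃ : ℕ) : Prop :=
  (u₂ < a₂ + b₂ ∧ u₃ < a₃) ∨ (u₂ < b₂ ∧ u₃ < a₃ + b₃)

namespace HerzogRelations

variable {n₁ n₂ n₃ a₁ a₂ a₃ b₁ b₂ b₃ : ℕ}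

theorem n₁_pos (P : HerzogRelations n₁ n₂ n₃ a₁ a₂ a₃ b₁ b₂ b₃) : 0 < n₁ := by
  by_contra! h
  have := P.min₁ 1 one_pos (by simp [Nat.le_zero.1 h, genBy, zero_mem])
  have := P.a₁_pos; have := P.b₁_pos
  omega

theorem n₂_pos (P : HerzogRelations n₁ n₂ n₃ a₁ a₂ a₃ b₁ b₂ b₃) : 0 < n₂ := by
  by_contra! h
  have := P.min₂ 1 one_pos (by simp [Nat.le_zero.1 h, genBy, zero_mem])
  have := P.a₂_pos; have := P.b₂_pos
  omega

theorem n₃_pos (P : HerzogRelations n₁ n₂ n₃ a₁ a₂ a₃ b₁ b₂ b₃) : 0 < n₃ := by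
  by_contra! h
  have := P.min₃ 1 one_pos (by simp [Nat.le_zero.1 h, genBy, zero_mem])
  have := P.a₃_pos; have := P.b₃_pos
  omega

theorem rel₁_int (P : HerzogRelations n₁ n₂ n₃ a₁ a₂ a₃ b₁ b₂ b₃) :
    (a₁ + b₁ : ℤ) * n₁ = b₂ * n₂ + a₃ * n₃ := by
  exact_mod_cast P.rel₁

theorem rel₂_int (P : HerzogRelations n₁ n₂ n₃ a₁ a₂ a₃ b₁ b₂ b₃) :
    (a₂ + b₂ : ℤ) * n₂ = b₃ * n₃ + a₁ * n₁ := by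
  exact_mod_cast P.rel₂

theorem rel₃_int (P : HerzogRelations n₁ n₂ n₃ a₁ a₂ a₃ b₁ b₂ b₃) :
    (a₃ + b₃ : ℤ) * n₃ = b₁ * n₁ + a₂ * n₂ := by
  exact_mod_cast P.rel₃

theorem relCone_of_exactlyOnePos (P : HerzogRelations n₁ n₂ n₃ a₁ a₂ a₃ b₁ b₂ b₃)
    {w₁ w₂ w₃ : ℤ} (hw : w₁ * n₁ + w₂ * n₂ + w₃ * n₃ = 0) (hpos : ExactlyOnePos w₁ w₂ w₃)
    (ih : ∀ {v₁ v₂ v₃ : ℤ}, v₁ * n₁ + v₂ * n₂ + v₃ * n₃ = 0 →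
      weight n₁ n₂ n₃ v₁ v₂ v₃ < weight n₁ n₂ n₃ w₁ w₂ w₃ → relCone a₁ a₂ a₃ b₁ b₂ b₃ v₁ v₂ v₃) :
    relCone a₁ a₂ a₃ b₁ b₂ b₃ w₁ w₂ w₃ := by
  have := P.n₁_pos; have := P.n₂_pos; have := P.n₃_pos
  rcases hpos with ⟨h₁, h₂, h₃⟩ | ⟨h₂, h₃, h₁⟩ | ⟨h₃, h₁, h₂⟩
  · have := weight_sub_row_lt P.b₂_pos P.a₃_pos ‹_› ‹_› ‹_› P.rel₁ P.min₁ hw h₁ h₂ h₃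
    obtain ⟨s, t, u, hs, ht, hu, e₁, e₂, e₃⟩ :=
      ih (by push_cast; linear_combination hw - P.rel₁_int) this
    push_cast at e₁
    exact ⟨s + 1, t, u, by linarith, ht, hu, by linear_combination e₁,
      by linear_combination e₂, by linear_combination e₃⟩
  · have := weight_sub_row_lt P.b₃_pos P.a₁_pos ‹_› ‹_› ‹_› P.rel₂ P.min₂
      (by linear_combination hw) h₂ h₃ h₁
    obtain ⟨s, t, u, hs, ht, hu, e₁, e₂, e₃⟩ := ih (v₁ := w₁ + a₁) (v₂ := w₂ - ↑(a₂ + b₂))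
      (v₃ := w₃ + b₃) (by push_cast; linear_combination hw - P.rel₂_int)
      (by unfold weight at this ⊢; linarith)
    push_cast at e₂
    exact ⟨s, t + 1, u, hs, by linarith, hu, by linear_combination e₁,
      by linear_combination e₂, by linear_combination e₃⟩
  · have := weight_sub_row_lt P.b₁_pos P.a₂_pos ‹_› ‹_› ‹_› P.rel₃ P.min₃
      (by linear_combination hw) h₃ h₁ h₂
    obtain ⟨s, t, u, hs, ht, hu, e₁, e₂, e₃⟩ := ih (v₁ := w₁ + b₁) (v₂ := w₂ + a₂)
      (v₃ := w₃ - ↑(a₃ + b₃)) (by push_cast; linear_combination hw - P.rel₃_int)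
      (by unfold weight at this ⊢; linarith)
    push_cast at e₃
    exact ⟨s, t, u + 1, hs, ht, by linarith, by linear_combination e₁,
      by linear_combination e₂, by linear_combination e₃⟩

theorem relCone_of_eq_zero (P : HerzogRelations n₁ n₂ n₃ a₁ a₂ a₃ b₁ b₂ b₃) {w₁ w₂ w₃ : ℤ}
    (hw : w₁ * n₁ + w₂ * n₂ + w₃ * n₃ = 0) : relCone a₁ a₂ a₃ b₁ b₂ b₃ w₁ w₂ w₃ := by
  obtain ⟨N, hN⟩ : ∃ N, (weight n₁ n₂ n₃ w₁ w₂ w₃).toNat = N := ⟨_, rfl⟩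
  induction N using Nat.strong_induction_on generalizing w₁ w₂ w₃ with
  | _ N ih =>
    subst hN
    have descend : ∀ {v₁ v₂ v₃ : ℤ}, v₁ * n₁ + v₂ * n₂ + v₃ * n₃ = 0 →
        weight n₁ n₂ n₃ v₁ v₂ v₃ < weight n₁ n₂ n₃ w₁ w₂ w₃ → relCone a₁ a₂ a₃ b₁ b₂ b₃ v₁ v₂ v₃ :=
      fun hv hlt => ih _ ((Int.toNat_lt_toNat ((weight_nonneg ..).trans_lt hlt)).2 hlt) hv rfl
    by_cases h0 : w₁ = 0 ∧ w₂ = 0 ∧ w₃ = 0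
    · obtain ⟨rfl, rfl, rfl⟩ := h0
      exact ⟨0, 0, 0, le_rfl, le_rfl, le_rfl, by ring, by ring, by ring⟩
    rcases exactlyOnePos_or_neg P.n₁_pos P.n₂_pos P.n₃_pos hw h0 with h | h
    · exact P.relCone_of_exactlyOnePos hw h descend
    · refine relCone.neg (P.relCone_of_exactlyOnePos (by linear_combination -hw) h ?_)
      rw [weight_neg]
      exact descend

theorem exists_cone_of_memZ (P : HerzogRelations n₁ n₂ n₃ a₁ a₂ a₃ b₁ b₂ b₃) {x₁ x₂ x₃ : ℤ}
    (h : memZ (genBy {n₁, n₂, n₃}) (x₁ * n₁ + x₂ * n₂ + x₃ * n₃)) :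
    ∃ s t u : ℤ, 0 ≤ s ∧ 0 ≤ t ∧ 0 ≤ u ∧ (s = 0 ∨ t = 0 ∨ u = 0) ∧
      0 ≤ x₁ + s * (a₁ + b₁) - t * a₁ - u * b₁ ∧
      0 ≤ x₂ + t * (a₂ + b₂) - u * a₂ - s * b₂ ∧
      0 ≤ x₃ + u * (a₃ + b₃) - s * a₃ - t * b₃ := by
  obtain ⟨y₁, y₂, y₃, hy⟩ := memZ_genBy_triple.1 h
  obtain ⟨s, t, u, hs, ht, hu, hz, e₁, e₂, e₃⟩ :=
    (P.relCone_of_eq_zero (w₁ := y₁ - x₁) (w₂ := y₂ - x₂) (w₃ := y₃ - x₃)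
      (by linear_combination hy)).exists_coeff_eq_zero
  exact ⟨s, t, u, hs, ht, hu, hz, by linarith [Int.natCast_nonneg y₁],
    by linarith [Int.natCast_nonneg y₂], by linarith [Int.natCast_nonneg y₃]⟩

theorem memZ_neg_add_iff (P : HerzogRelations n₁ n₂ n₃ a₁ a₂ a₃ b₁ b₂ b₃) {u₂ u₃ : ℕ} :
    memZ (genBy {n₁, n₂, n₃}) (-n₁ + u₂ * n₂ + u₃ * n₃) ↔ ¬ IsAperyExponent a₂ a₃ b₂ b₃ u₂ u₃ := by
  have := P.a₁_pos; have := P.a₂_pos; have := P.a₃_pos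
  have := P.b₁_pos; have := P.b₂_pos; have := P.b₃_pos
  constructor
  · intro hm h
    obtain ⟨s, t, u, hs, ht, hu, hz, y₁, y₂, y₃⟩ :=
      P.exists_cone_of_memZ (x₁ := -1) (x₂ := u₂) (x₃ := u₃) (by convert hm using 1; ring)
    -- each coefficient `≥ 1` takes at least `aₖ` or `bₖ` from some coordinate; no case survives
    rcases h with ⟨h₂, h₃⟩ | ⟨h₂, h₃⟩ <;>
      rcases (by omega : s = 0 ∨ 1 ≤ s) with rfl | hs <;>
      rcases (by omega : t = 0 ∨ 1 ≤ t) with rfl | ht <;>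
      rcases (by omega : u = 0 ∨ 1 ≤ u) with rfl | hu <;>
      first | omega | nlinarith
  · intro h
    simp only [IsAperyExponent, not_or, not_and, not_lt] at h
    rw [memZ_genBy_triple]
    have r₁ := P.rel₁_int; have r₂ := P.rel₂_int; have r₃ := P.rel₃_int
    by_cases h₂ : a₂ + b₂ ≤ u₂
    · refine ⟨a₁ - 1, u₂ - (a₂ + b₂), u₃ + b₃, ?_⟩
      push_cast [Nat.cast_sub h₂, Nat.cast_sub (by omega : 1 ≤ a₁)]
      linear_combination -r₂
    by_cases h₃ : a₃ + b₃ ≤ u₃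
    · refine ⟨b₁ - 1, u₂ + a₂, u₃ - (a₃ + b₃), ?_⟩
      push_cast [Nat.cast_sub h₃, Nat.cast_sub (by omega : 1 ≤ b₁)]
      linear_combination -r₃
    · refine ⟨a₁ + b₁ - 1, u₂ - b₂, u₃ - a₃, ?_⟩
      push_cast [Nat.cast_sub (by have := h.2; omega : b₂ ≤ u₂), Nat.cast_sub (h.1 (by omega)),
        Nat.cast_sub (by omega : 1 ≤ a₁ + b₁)]
      linear_combination r₁

theorem mem_pseudoFrob_neg_add_iff (P : HerzogRelations n₁ n₂ n₃ a₁ a₂ a₃ b₁ b₂ b₃)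
    {u₂ u₃ : ℕ} :
    (-n₁ + u₂ * n₂ + u₃ * n₃ : ℤ) ∈ pseudoFrob (genBy {n₁, n₂, n₃}) ↔
      IsAperyExponent a₂ a₃ b₂ b₃ u₂ u₃ ∧ ¬ IsAperyExponent a₂ a₃ b₂ b₃ (u₂ + 1) u₃ ∧
        ¬ IsAperyExponent a₂ a₃ b₂ b₃ u₂ (u₃ + 1) := by
  have apery : ∀ v₂ v₃ : ℕ, IsAperyExponent a₂ a₃ b₂ b₃ v₂ v₃ ↔
      ¬ memZ (genBy {n₁, n₂, n₃}) (-n₁ + v₂ * n₂ + v₃ * n₃) := fun _ _ => by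
    rw [P.memZ_neg_add_iff, not_not]
  simp only [apery, not_not, Nat.cast_add, Nat.cast_one]
  constructor
  · rintro ⟨hf, hadd⟩
    refine ⟨hf, ?_, ?_⟩
    · convert hadd n₂ (mem_genBy_triple.2 ⟨0, 1, 0, by ring⟩) P.n₂_pos.ne' using 1; ring
    · convert hadd n₃ (mem_genBy_triple.2 ⟨0, 0, 1, by ring⟩) P.n₃_pos.ne' using 1; ring
  · rintro ⟨hf, h₂, h₃⟩
    refine mem_pseudoFrob_genBy_of_add_mem hf ?_
    rintro a (rfl | rfl | rfl) -
    · exact memZ_genBy_triple.2 ⟨0, u₂, u₃, by ring⟩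
    · convert h₂ using 1; ring
    · convert h₃ using 1; ring

theorem pseudoFrob_eq (P : HerzogRelations n₁ n₂ n₃ a₁ a₂ a₃ b₁ b₂ b₃) :
    pseudoFrob (genBy {n₁, n₂, n₃}) =
      {-(n₁ : ℤ) + (a₂ + b₂ - 1 : ℕ) * n₂ + (a₃ - 1 : ℕ) * n₃,
        -(n₁ : ℤ) + (b₂ - 1 : ℕ) * n₂ + (a₃ + b₃ - 1 : ℕ) * n₃} := by
  ext f
  constructor
  · intro hf
    obtain ⟨y₁, y₂, y₃, hy⟩ :=
      memZ_genBy_triple.1 (hf.2 n₁ (mem_genBy_triple.2 ⟨1, 0, 0, by ring⟩) P.n₁_pos.ne')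
    obtain rfl : y₁ = 0 := by
      by_contra h
      refine hf.1 (memZ_genBy_triple.2 ⟨y₁ - 1, y₂, y₃, ?_⟩)
      push_cast [Nat.cast_sub (by omega : 1 ≤ y₁)]
      linear_combination hy
    obtain rfl : f = -n₁ + y₂ * n₂ + y₃ * n₃ := by linear_combination -hy
    obtain ⟨h₁, h₂, h₃⟩ := P.mem_pseudoFrob_neg_add_iff.1 hf
    unfold IsAperyExponent at h₁ h₂ h₃
    rcases (by omega : (y₂ = a₂ + b₂ - 1 ∧ y₃ = a₃ - 1) ∨ (y₂ = b₂ - 1 ∧ y₃ = a₃ + b₃ - 1))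
      with ⟨rfl, rfl⟩ | ⟨rfl, rfl⟩
    · exact .inl rfl
    · exact .inr rfl
  · have := P.a₂_pos; have := P.a₃_pos; have := P.b₂_pos; have := P.b₃_pos
    rintro (rfl | rfl) <;> refine P.mem_pseudoFrob_neg_add_iff.2 ?_ <;>
      unfold IsAperyExponent <;> omega

theorem mem_trace_iff_sub_or_add (P : HerzogRelations n₁ n₂ n₃ a₁ a₂ a₃ b₁ b₂ b₃) {z : ℤ} :
    z ∈ trace (genBy {n₁, n₂, n₃}) ↔ memZ (genBy {n₁, n₂, n₃}) z ∧
      (memZ (genBy {n₁, n₂, n₃}) (z - (b₂ * n₂ - a₁ * n₁)) ∨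
        memZ (genBy {n₁, n₂, n₃}) (z + (b₂ * n₂ - a₁ * n₁))) := by
  have := P.a₁_pos; have := P.a₂_pos; have := P.a₃_pos; have := P.b₂_pos
  have hD : (-(n₁ : ℤ) + (b₂ - 1 : ℕ) * n₂ + (a₃ + b₃ - 1 : ℕ) * n₃) -
      (-(n₁ : ℤ) + (a₂ + b₂ - 1 : ℕ) * n₂ + (a₃ - 1 : ℕ) * n₃) = b₂ * n₂ - a₁ * n₁ := by
    push_cast [Nat.cast_sub (by omega : 1 ≤ b₂), Nat.cast_sub (by omega : 1 ≤ a₃ + b₃),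
      Nat.cast_sub (by omega : 1 ≤ a₂ + b₂), Nat.cast_sub (by omega : 1 ≤ a₃)]
    linear_combination -P.rel₂_int
  rw [mem_trace_iff_of_pseudoFrob_eq_pair P.pseudoFrob_eq, hD]

theorem not_memZ_sub_or_add_of_lt_min (P : HerzogRelations n₁ n₂ n₃ a₁ a₂ a₃ b₁ b₂ b₃)
    {x₁ x₂ x₃ : ℕ} (h₁ : x₁ < min a₁ b₁) (h₂ : x₂ < min a₂ b₂) (h₃ : x₃ < min a₃ b₃) :
    ¬ (memZ (genBy {n₁, n₂, n₃}) (x₁ * n₁ + x₂ * n₂ + x₃ * n₃ - (b₂ * n₂ - a₁ * n₁)) ∨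
      memZ (genBy {n₁, n₂, n₃}) (x₁ * n₁ + x₂ * n₂ + x₃ * n₃ + (b₂ * n₂ - a₁ * n₁))) := by
  rw [lt_min_iff] at h₁ h₂ h₃
  rintro (hm | hm)
  · obtain ⟨s, t, u, hs, ht, hu, hz, y₁, y₂, y₃⟩ :=
      P.exists_cone_of_memZ (x₁ := x₁ + a₁) (x₂ := x₂ - b₂) (x₃ := x₃)
        (by convert hm using 1; ring)
    rcases (by omega : s = 0 ∨ 1 ≤ s) with rfl | hs <;>
      rcases (by omega : t = 0 ∨ 1 ≤ t) with rfl | ht <;>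
      rcases (by omega : u = 0 ∨ 1 ≤ u) with rfl | hu <;>
      first | omega | nlinarith
  · obtain ⟨s, t, u, hs, ht, hu, hz, y₁, y₂, y₃⟩ :=
      P.exists_cone_of_memZ (x₁ := x₁ - a₁) (x₂ := x₂ + b₂) (x₃ := x₃)
        (by convert hm using 1; ring)
    rcases (by omega : s = 0 ∨ 1 ≤ s) with rfl | hs <;>
      rcases (by omega : t = 0 ∨ 1 ≤ t) with rfl | ht <;>
      rcases (by omega : u = 0 ∨ 1 ≤ u) with rfl | hu <;>
      first | omega | nlinarith

theorem eq_of_lt_min_of_eq (P : HerzogRelations n₁ n₂ n₃ a₁ a₂ a₃ b₁ b₂ b₃)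
    {x₁ x₂ x₃ y₁ y₂ y₃ : ℕ} (hx₁ : x₁ < min a₁ b₁) (hx₂ : x₂ < min a₂ b₂) (hx₃ : x₃ < min a₃ b₃)
    (h : x₁ * n₁ + x₂ * n₂ + x₃ * n₃ = y₁ * n₁ + y₂ * n₂ + y₃ * n₃) :
    x₁ = y₁ ∧ x₂ = y₂ ∧ x₃ = y₃ := by
  rw [lt_min_iff] at hx₁ hx₂ hx₃
  obtain ⟨s, t, u, hs, ht, hu, hz, e₁, e₂, e₃⟩ :=
    (P.relCone_of_eq_zero (w₁ := y₁ - x₁) (w₂ := y₂ - x₂) (w₃ := y₃ - x₃)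
      (by push_cast [← Nat.cast_inj (R := ℤ)] at h; linear_combination -h)).exists_coeff_eq_zero
  rcases (by omega : s = 0 ∨ 1 ≤ s) with rfl | hs <;>
    rcases (by omega : t = 0 ∨ 1 ≤ t) with rfl | ht <;>
    rcases (by omega : u = 0 ∨ 1 ≤ u) with rfl | hu <;>
    first | omega | (exfalso; nlinarith)

theorem translateZ_subset_trace (P : HerzogRelations n₁ n₂ n₃ a₁ a₂ a₃ b₁ b₂ b₃) :
    translateZ (min a₁ b₁ * n₁) (genBy {n₁, n₂, n₃}) ∪
      translateZ (min a₂ b₂ * n₂) (genBy {n₁, n₂, n₃}) ∪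
      translateZ (min a₃ b₃ * n₃) (genBy {n₁, n₂, n₃}) ⊆ trace (genBy {n₁, n₂, n₃}) := by
  have shift : ∀ {k : ℕ}, k ∈ genBy {n₁, n₂, n₃} →
      memZ (genBy {n₁, n₂, n₃}) (k - (b₂ * n₂ - a₁ * n₁)) ∨
        memZ (genBy {n₁, n₂, n₃}) (k + (b₂ * n₂ - a₁ * n₁)) →
      translateZ k (genBy {n₁, n₂, n₃}) ⊆ trace (genBy {n₁, n₂, n₃}) := by
    rintro k hk hkD _ ⟨h, hh, rfl⟩
    refine P.mem_trace_iff_sub_or_add.2 ⟨⟨_, (AddSubmonoid.closure _).add_mem hk hh, rfl⟩, ?_⟩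
    rcases hkD with hkD | hkD
    · exact .inl (by convert memZ_add hkD ⟨h, hh, rfl⟩ using 1; push_cast; ring)
    · exact .inr (by convert memZ_add hkD ⟨h, hh, rfl⟩ using 1; push_cast; ring)
  have r₁ := P.rel₁_int; have r₂ := P.rel₂_int
  refine Set.union_subset (Set.union_subset
    (shift (mem_genBy_triple.2 ⟨min a₁ b₁, 0, 0, by ring⟩) ?_)
    (shift (mem_genBy_triple.2 ⟨0, min a₂ b₂, 0, by ring⟩) ?_))
    (shift (mem_genBy_triple.2 ⟨0, 0, min a₃ b₃, by ring⟩) ?_)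
  · exact memZ_min_mul_sub_or_add (n := n₁) (p := a₃ * n₃) (q := b₂ * n₂)
      (mem_genBy_triple.2 ⟨0, 0, a₃, by ring⟩) (mem_genBy_triple.2 ⟨0, b₂, 0, by ring⟩)
      (by push_cast; linear_combination -r₁) (by push_cast; ring)
  · exact memZ_min_mul_sub_or_add (n := n₂) (p := a₁ * n₁) (q := b₃ * n₃)
      (mem_genBy_triple.2 ⟨a₁, 0, 0, by ring⟩) (mem_genBy_triple.2 ⟨0, 0, b₃, by ring⟩)
      (by push_cast; ring) (by push_cast; linear_combination r₂)
  · exact memZ_min_mul_sub_or_add (n := n₃) (p := a₂ * n₂) (q := b₁ * n₁)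
      (mem_genBy_triple.2 ⟨0, a₂, 0, by ring⟩) (mem_genBy_triple.2 ⟨b₁, 0, 0, by ring⟩)
      (by push_cast; linear_combination r₂) (by push_cast; linear_combination -r₁)

theorem trace_eq (P : HerzogRelations n₁ n₂ n₃ a₁ a₂ a₃ b₁ b₂ b₃) :
    trace (genBy {n₁, n₂, n₃}) =
      translateZ (min a₁ b₁ * n₁) (genBy {n₁, n₂, n₃}) ∪
        translateZ (min a₂ b₂ * n₂) (genBy {n₁, n₂, n₃}) ∪
        translateZ (min a₃ b₃ * n₃) (genBy {n₁, n₂, n₃}) := by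
  refine Set.Subset.antisymm (fun z hz => ?_) P.translateZ_subset_trace
  obtain ⟨⟨_, hy, rfl⟩, hD⟩ := P.mem_trace_iff_sub_or_add.1 hz
  obtain ⟨y₁, y₂, y₃, rfl⟩ := mem_genBy_triple.1 hy
  exact mem_translateZ_of_not_lt fun hbox =>
    P.not_memZ_sub_or_add_of_lt_min hbox.1 hbox.2.1 hbox.2.2 (by exact_mod_cast hD)

theorem res_eq (P : HerzogRelations n₁ n₂ n₃ a₁ a₂ a₃ b₁ b₂ b₃) :
    res (genBy {n₁, n₂, n₃}) = min a₁ b₁ * min a₂ b₂ * min a₃ b₃ := by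
  classical
  let box := Finset.range (min a₁ b₁) ×ˢ Finset.range (min a₂ b₂) ×ˢ Finset.range (min a₃ b₃)
  let φ : ℕ × ℕ × ℕ → ℕ := fun y => y.1 * n₁ + y.2.1 * n₂ + y.2.2 * n₃
  have hbox : ∀ y, y ∈ box ↔ y.1 < min a₁ b₁ ∧ y.2.1 < min a₂ b₂ ∧ y.2.2 < min a₃ b₃ := by
    simp [box]
  have hset : {h | h ∈ genBy {n₁, n₂, n₃} ∧ (h : ℤ) ∉ trace (genBy {n₁, n₂, n₃})} =
      box.image φ := by
    ext h
    simp only [Set.mem_ofPred_eq, Finset.coe_image, Set.mem_image, Finset.mem_coe]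
    constructor
    · rintro ⟨hh, hnot⟩
      obtain ⟨y₁, y₂, y₃, rfl⟩ := mem_genBy_triple.1 hh
      refine ⟨(y₁, y₂, y₃), (hbox _).2 (not_not.1 fun hy => hnot ?_), rfl⟩
      rw [P.trace_eq]
      exact mem_translateZ_of_not_lt hy
    · rintro ⟨y, hy, rfl⟩
      obtain ⟨h₁, h₂, h₃⟩ := (hbox y).1 hy
      refine ⟨mem_genBy_triple.2 ⟨_, _, _, rfl⟩, fun ht => ?_⟩
      refine P.not_memZ_sub_or_add_of_lt_min h₁ h₂ h₃ ?_
      have := (P.mem_trace_iff_sub_or_add.1 ht).2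
      push_cast [φ] at this
      exact this
  have hinj : Set.InjOn φ box := by
    rintro ⟨x₁, x₂, x₃⟩ hx ⟨y₁, y₂, y₃⟩ - hxy
    obtain ⟨h₁, h₂, h₃⟩ := (hbox _).1 hx
    obtain ⟨rfl, rfl, rfl⟩ := P.eq_of_lt_min_of_eq h₁ h₂ h₃ hxy
    rfl
  rw [res, hset, Set.ncard_coe_finset, Finset.card_image_of_injOn hinj]
  simp [box, mul_assoc]

end HerzogRelations

end NumSgp

theorem stmt_8_general (H : Set ℕ) (n₁ n₂ n₃ : ℕ)
    (hgen : H = genBy {n₁, n₂, n₃})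
    (a₁ a₂ a₃ b₁ b₂ b₃ : ℕ)
    (ha₁ : 0 < a₁) (ha₂ : 0 < a₂) (ha₃ : 0 < a₃)
    (hb₁ : 0 < b₁) (hb₂ : 0 < b₂) (hb₃ : 0 < b₃)
    (h1 : (a₁ + b₁) * n₁ = b₂ * n₂ + a₃ * n₃)
    (h2 : (a₂ + b₂) * n₂ = a₁ * n₁ + b₃ * n₃)
    (h3 : (a₃ + b₃) * n₃ = b₁ * n₁ + a₂ * n₂)
    (hmin1 : ∀ c : ℕ, 0 < c → c * n₁ ∈ genBy {n₂, n₃} → a₁ + b₁ ≤ c)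
    (hmin2 : ∀ c : ℕ, 0 < c → c * n₂ ∈ genBy {n₁, n₃} → a₂ + b₂ ≤ c)
    (hmin3 : ∀ c : ℕ, 0 < c → c * n₃ ∈ genBy {n₁, n₂} → a₃ + b₃ ≤ c) :
    trace H =
      {z : ℤ | ∃ h ∈ H, z = ((min a₁ b₁ * n₁ + h : ℕ) : ℤ)} ∪
      {z : ℤ | ∃ h ∈ H, z = ((min a₂ b₂ * n₂ + h : ℕ) : ℤ)} ∪
      {z : ℤ | ∃ h ∈ H, z = ((min a₃ b₃ * n₃ + h : ℕ) : ℤ)} ∧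
    res H = min a₁ b₁ * min a₂ b₂ * min a₃ b₃ := by
  subst hgen
  have P : HerzogRelations n₁ n₂ n₃ a₁ a₂ a₃ b₁ b₂ b₃ :=
    ⟨ha₁, ha₂, ha₃, hb₁, hb₂, hb₃, h1, by rw [h2, add_comm], h3, hmin1,
      by simpa only [Set.pair_comm] using hmin2, hmin3⟩
  exact ⟨P.trace_eq, P.res_eq⟩

/-- for a non-symmetric 3-generated numerical semigroup with
structure constants `aᵢ, bᵢ` and `dᵢ = min{aᵢ, bᵢ}`, one has
`tr(H) = (d₁n₁ + H) ∪ (d₂n₂ + H) ∪ (d₃n₃ + H)` and `res(H) = d₁d₂d₃`. -/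
theorem stmt_8 (H : Set ℕ) (n₁ n₂ n₃ : ℕ)
    (hgen : H = genBy {n₁, n₂, n₃}) (hnum : IsNumSgp H)
    (hmin : ∀ x y : ℕ, H ≠ genBy {x, y})
    (hns : ¬ IsSymmetric H)
    (a₁ a₂ a₃ b₁ b₂ b₃ : ℕ)
    (ha₁ : 0 < a₁) (ha₂ : 0 < a₂) (ha₃ : 0 < a₃)
    (hb₁ : 0 < b₁) (hb₂ : 0 < b₂) (hb₃ : 0 < b₃)
    (h1 : (a₁ + b₁) * n₁ = b₂ * n₂ + a₃ * n₃)
    (h2 : (a₂ + b₂) * n₂ = a₁ * n₁ + b₃ * n₃)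
    (h3 : (a₃ + b₃) * n₃ = b₁ * n₁ + a₂ * n₂)
    (hmin1 : ∀ c : ℕ, 0 < c → c * n₁ ∈ genBy {n₂, n₃} → a₁ + b₁ ≤ c)
    (hmin2 : ∀ c : ℕ, 0 < c → c * n₂ ∈ genBy {n₁, n₃} → a₂ + b₂ ≤ c)
    (hmin3 : ∀ c : ℕ, 0 < c → c * n₃ ∈ genBy {n₁, n₂} → a₃ + b₃ ≤ c) :
    trace H =
      {z : ℤ | ∃ h ∈ H, z = ((min a₁ b₁ * n₁ + h : ℕ) : ℤ)} ∪
      {z : ℤ | ∃ h ∈ H, z = ((min a₂ b₂ * n₂ + h : ℕ) : ℤ)} ∪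
      {z : ℤ | ∃ h ∈ H, z = ((min a₃ b₃ * n₃ + h : ℕ) : ℤ)} ∧
    res H = min a₁ b₁ * min a₂ b₂ * min a₃ b₃ :=
  stmt_8_general H n₁ n₂ n₃ hgen a₁ a₂ a₃ b₁ b₂ b₃ ha₁ ha₂ ha₃ hb₁ hb₂ hb₃ h1 h2 h3 hmin1 hmin2
    hmin3
end

section
/- Let H be a numerical semigroup minimally generated by three elements. Then res(H) ≤ g(H) − n(H). -/
/-!
Let `F` be the Frobenius number. The gaps of `H` are the `F - x` with `x ∈ H`, `x < F`, of which
there are `n(H)`, together with the holes: gaps `ℓ` such that `F - ℓ` is a gap too. So it suffices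
to inject `H ∖ tr(H)` into the holes. If `b ∈ H` is not in the trace, some `k` has `F - k ∉ H` and
`b + k ∉ H`; then `b + k` is a hole, and adding elements of `H` to it as long as possible ends at a
pseudo-Frobenius number `f ≠ F` that is a hole. A three-generated semigroup has at most two
pseudo-Frobenius numbers (Fröberg–Gottlieb–Häggkvist), so this `f` does not depend on `b`, and
`b ↦ b + (F - f)` is the injection.

For the bound on the type, write `p + n₁ = b n₂ + c n₃` for a pseudo-Frobenius number `p`: then
`(b, c)` is a corner of the finite down-set of points whose value is not in `n₁ + H`. The lowest
points of the complementary up-set in a column or row are relations `u n₂ + v n₃ = γ n₁`, and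
comparing three of them shows that a corner with another corner to its right lies in the top row;
hence there are at most two corners.
-/

namespace NumSgp

def IsPF (S : AddSubmonoid ℕ) (p : ℕ) : Prop :=
  p ∉ S ∧ ∀ m ∈ S, m ≠ 0 → p + m ∈ S

section PseudoFrobenius

variable {S : AddSubmonoid ℕ} {p q : ℕ}

theorem IsPF.eq_of_add_eq {m : ℕ} (hp : IsPF S p) (hq : IsPF S q) (hm : m ∈ S)
    (h : p + m = q) : p = q := by
  by_contra hne
  exact hq.1 (h ▸ hp.2 m hm (by rintro rfl; exact hne (by simpa using h)))

theorem IsPF.eq_of_add_mul_eq {a b n : ℕ} (hp : IsPF S p) (hq : IsPF S q) (hn : n ∈ S)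
    (h : p + a * n = q + b * n) : p = q := by
  rcases le_total a b with hab | hab
  · obtain ⟨k, rfl⟩ := Nat.exists_eq_add_of_le hab
    exact (hq.eq_of_add_eq hp (by simpa using S.nsmul_mem hn k) (by linarith)).symm
  · obtain ⟨k, rfl⟩ := Nat.exists_eq_add_of_le hab
    exact hp.eq_of_add_eq hq (by simpa using S.nsmul_mem hn k) (by linarith)

end PseudoFrobenius

theorem memZ_natCast_iff {H : Set ℕ} {n : ℕ} : memZ H n ↔ n ∈ H :=
  ⟨fun ⟨_, hm, hmn⟩ => Nat.cast_injective hmn ▸ hm, fun h => ⟨n, h, rfl⟩⟩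

section LargestGap

variable {S : AddSubmonoid ℕ} {F : ℕ} (hF : IsGreatest (S : Set ℕ)ᶜ F)
include hF

theorem mem_of_lt {n : ℕ} (hn : F < n) : n ∈ S :=
  by_contra fun h => absurd (hF.2 h) (not_le.2 hn)

theorem memZ_of_lt {z : ℤ} (hz : F < z) : memZ S z :=
  ⟨z.toNat, mem_of_lt hF (by omega), by omega⟩

theorem frob_eq_of_isGreatest_compl : frob S = F := by
  refine IsGreatest.csSup_eq ⟨fun h => hF.1 (memZ_natCast_iff.1 h), fun z hz => ?_⟩
  by_contra! h
  exact hz (memZ_of_lt hF h)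

theorem isPF_of_isGreatest_compl : IsPF S F :=
  ⟨hF.1, fun _ _ hm => mem_of_lt hF (by omega)⟩

theorem natCast_mem_pseudoFrob : (F : ℤ) ∈ pseudoFrob S :=
  ⟨fun h => hF.1 (memZ_natCast_iff.1 h), fun _ _ hm => memZ_of_lt hF (by omega)⟩

end LargestGap

def holes (S : AddSubmonoid ℕ) (F : ℕ) : Set ℕ := {ℓ | ℓ ∉ S ∧ F - ℓ ∉ S}

section Holes

variable {S : AddSubmonoid ℕ} {F : ℕ}

theorem ne_of_mem_holes {ℓ : ℕ} (hℓ : ℓ ∈ holes S F) : ℓ ≠ F := by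
  rintro rfl
  exact hℓ.2 (by simp)

variable (hF : IsGreatest (S : Set ℕ)ᶜ F)
include hF

theorem finite_holes : (holes S F).Finite :=
  (Set.finite_Iic F).subset fun _ hℓ => hF.2 hℓ.1

theorem ncard_holes_add_nongaps_le_gaps : (holes S F).ncard + nongaps S ≤ gaps S := by
  have hlt : {x : ℕ | x ∈ (S : Set ℕ) ∧ (x : ℤ) < frob S} = {x | x ∈ S ∧ x < F} := by
    simp [frob_eq_of_isGreatest_compl hF]
  have hfin : (S : Set ℕ)ᶜ.Finite := (Set.finite_Iic F).subset fun _ hn => hF.2 hn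
  have hinj : Set.InjOn (F - ·) {x | x ∈ S ∧ x < F} :=
    fun x ⟨_, hx⟩ y ⟨_, hy⟩ (h : F - x = F - y) => by omega
  have hdisj : Disjoint (holes S F) ((F - ·) '' {x | x ∈ S ∧ x < F}) := by
    rw [Set.disjoint_left]
    rintro _ ⟨-, h⟩ ⟨x, ⟨hx, hxF⟩, rfl⟩
    exact h (by rwa [Nat.sub_sub_self hxF.le])
  have hsub : holes S F ∪ (F - ·) '' {x | x ∈ S ∧ x < F} ⊆ (S : Set ℕ)ᶜ := by
    rintro _ (⟨h, -⟩ | ⟨x, ⟨hx, hxF⟩, rfl⟩)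
    · exact h
    · exact fun h => hF.1 (by simpa [Nat.sub_add_cancel hxF.le] using add_mem h hx)
  rw [nongaps, gaps, hlt, ← hinj.ncard_image,
    ← Set.ncard_union_eq hdisj (finite_holes hF) (hfin.subset fun _ h => hsub (Or.inr h))]
  exact Set.ncard_le_ncard hsub hfin

theorem add_mem_holes {ℓ m : ℕ} (hℓ : ℓ ∈ holes S F) (hm : m ∈ S) (h : ℓ + m ∉ S) :
    ℓ + m ∈ holes S F := by
  refine ⟨h, fun h' => hℓ.2 ?_⟩
  have : ℓ + m ≤ F := hF.2 h
  rw [show F - ℓ = F - (ℓ + m) + m by omega]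
  exact add_mem h' hm

theorem exists_isPF_mem_holes {ℓ : ℕ} (hℓ : ℓ ∈ holes S F) :
    ∃ f ∈ holes S F, IsPF S f ∧ ∃ h ∈ S, f = ℓ + h := by
  obtain ⟨_, ⟨hf, h, hh, rfl⟩, hmax⟩ := Set.exists_max_image {f ∈ holes S F | ∃ h ∈ S, f = ℓ + h}
    id ((finite_holes hF).subset fun _ hf => hf.1) ⟨ℓ, hℓ, 0, zero_mem _, rfl⟩
  refine ⟨_, hf, ⟨hf.1, fun m hm hm0 => ?_⟩, h, hh, rfl⟩
  by_contra hfm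
  have := hmax _ ⟨add_mem_holes hF hf hm hfm, h + m, add_mem hh hm, by ring⟩
  simp only [id] at this
  omega

theorem exists_notMem_of_natCast_notMem_trace {b : ℕ} (htr : (b : ℤ) ∉ trace S) :
    ∃ k, F - k ∉ S ∧ b + k ∉ S := by
  by_contra! h
  refine htr ⟨-F, ⟨F, natCast_mem_pseudoFrob hF, 0, zero_mem _, by simp⟩, F + b, ?_, by ring⟩
  rintro _ ⟨p, hp, h', hh', rfl⟩
  rcases lt_or_ge p 0 with hp0 | hp0
  · exact memZ_of_lt hF (by omega)
  · lift p to ℕ using hp0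
    have hpF : p ≤ F := hF.2 fun h => hp.1 (memZ_natCast_iff.2 h)
    have := h (F - p) (by rw [Nat.sub_sub_self hpF]; exact fun h => hp.1 (memZ_natCast_iff.2 h))
    exact ⟨b + (F - p) + h', add_mem this hh', by push_cast [Nat.cast_sub hpF]; ring⟩

theorem add_sub_mem_holes {b k h : ℕ} (hb : b ∈ S) (hk : F - k ∉ S) (hh : h ∈ S)
    (hf : b + k + h ∈ holes S F) : b + (F - (b + k + h)) ∈ holes S F := by
  have : b + k + h ≤ F := hF.2 hf.1
  refine ⟨fun h' => hk ?_, fun h' => hf.1 ?_⟩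
  · rw [show F - k = b + (F - (b + k + h)) + h by omega]
    exact add_mem h' hh
  · rw [show b + k + h = F - (b + (F - (b + k + h))) + b by omega]
    exact add_mem h' hb

theorem exists_isPF_mem_holes_of_natCast_notMem_trace {b : ℕ} (hb : b ∈ S)
    (htr : (b : ℤ) ∉ trace S) :
    ∃ k, F - k ∉ S ∧ ∃ f ∈ holes S F, IsPF S f ∧ ∃ h ∈ S, f = b + k + h := by
  obtain ⟨k, hk, hbk⟩ := exists_notMem_of_natCast_notMem_trace hF htr
  have : b + k ≤ F := hF.2 hbk
  refine ⟨k, hk, exists_isPF_mem_holes hF ⟨hbk, fun h => hk ?_⟩⟩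
  rw [show F - k = F - (b + k) + b by omega]
  exact add_mem h hb

theorem res_le_ncard_holes
    (htype : ∀ p q r, IsPF S p → IsPF S q → IsPF S r → p = q ∨ p = r ∨ q = r) :
    res S ≤ (holes S F).ncard := by
  rcases Set.eq_empty_or_nonempty {h : ℕ | h ∈ (S : Set ℕ) ∧ (h : ℤ) ∉ trace S} with hR | ⟨b₀, hb₀⟩
  · simp only [res, hR, Set.ncard_empty, zero_le]
  obtain ⟨-, -, f, hf, hfPF, -⟩ :=
    exists_isPF_mem_holes_of_natCast_notMem_trace hF hb₀.1 hb₀.2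
  have huniq : ∀ g ∈ holes S F, IsPF S g → g = f := fun g hg hgPF => by
    rcases htype g f F hgPF hfPF (isPF_of_isGreatest_compl hF) with h | h | h
    · exact h
    · exact absurd h (ne_of_mem_holes hg)
    · exact absurd h (ne_of_mem_holes hf)
  refine Set.ncard_le_ncard_of_injOn (· + (F - f)) (fun b hb => ?_)
    (fun _ _ _ _ h => by simpa using h) (finite_holes hF)
  obtain ⟨k, hk, g, hg, hgPF, h, hh, rfl⟩ :=
    exists_isPF_mem_holes_of_natCast_notMem_trace hF hb.1 hb.2
  obtain rfl := huniq _ hg hgPF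
  exact add_sub_mem_holes hF hb.1 hk hh hg

end Holes

def InTranslate (S : AddSubmonoid ℕ) (n₁ n₂ n₃ b c : ℕ) : Prop :=
  ∃ w ∈ S, w + n₁ = b * n₂ + c * n₃

theorem IsPF.not_inTranslate {S : AddSubmonoid ℕ} {n₁ n₂ n₃ p b c : ℕ} (hp : IsPF S p)
    (h : p + n₁ = b * n₂ + c * n₃) : ¬ InTranslate S n₁ n₂ n₃ b c :=
  fun ⟨_, hw, hwe⟩ => hp.1 (Nat.add_right_cancel (hwe.trans h.symm) ▸ hw)

theorem inTranslate_swap {S : AddSubmonoid ℕ} {n₁ n₂ n₃ b c : ℕ} :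
    InTranslate S n₁ n₃ n₂ c b ↔ InTranslate S n₁ n₂ n₃ b c := by
  simp only [InTranslate, add_comm (c * n₃)]

section ThreeGenerated

variable {S : AddSubmonoid ℕ} {n₁ n₂ n₃ : ℕ}
  (hS : ∀ w, w ∈ S ↔ ∃ a b c : ℕ, a * n₁ + b * n₂ + c * n₃ = w)
include hS

theorem InTranslate.mono {b c b' c' : ℕ} (h : InTranslate S n₁ n₂ n₃ b c) (hb : b ≤ b')
    (hc : c ≤ c') : InTranslate S n₁ n₂ n₃ b' c' := by
  obtain ⟨w, hw, hwe⟩ := h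
  obtain ⟨x, rfl⟩ := Nat.exists_eq_add_of_le hb
  obtain ⟨y, rfl⟩ := Nat.exists_eq_add_of_le hc
  exact ⟨w + (0 * n₁ + x * n₂ + y * n₃), add_mem hw ((hS _).2 ⟨0, x, y, rfl⟩), by linarith⟩

theorem exists_mul_eq_of_inTranslate {u v : ℕ} (h : InTranslate S n₁ n₂ n₃ (u + 1) (v + 1))
    (hu : ¬ InTranslate S n₁ n₂ n₃ u (v + 1)) (hv : ¬ InTranslate S n₁ n₂ n₃ (u + 1) v) :
    ∃ γ, (u + 1) * n₂ + (v + 1) * n₃ = γ * n₁ := by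
  obtain ⟨w, hw, hwe⟩ := h
  obtain ⟨a, b, c, rfl⟩ := (hS w).1 hw
  cases b with
  | succ b => exact absurd ⟨a * n₁ + b * n₂ + c * n₃, (hS _).2 ⟨a, b, c, rfl⟩, by linarith⟩ hu
  | zero =>
    cases c with
    | succ c => exact absurd ⟨a * n₁ + 0 * n₂ + c * n₃, (hS _).2 ⟨a, 0, c, rfl⟩, by linarith⟩ hv
    | zero => exact ⟨a + 1, by linarith⟩

theorem exists_mul_eq_in_column {a c c₀ : ℕ} (h : InTranslate S n₁ n₂ n₃ (a + 1) c)
    (hleft : ¬ InTranslate S n₁ n₂ n₃ a c) (hlow : ¬ InTranslate S n₁ n₂ n₃ (a + 1) c₀) :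
    ∃ v, c₀ < v ∧ v ≤ c ∧ ∃ γ, (a + 1) * n₂ + v * n₃ = γ * n₁ := by
  obtain ⟨v, hvc, hmin⟩ := exists_minimal_le_of_wellFoundedLT _ c h
  have hv : c₀ < v := lt_of_not_ge fun hle => hlow (hmin.prop.mono hS le_rfl hle)
  obtain ⟨k, rfl⟩ := Nat.exists_eq_add_of_lt hv
  refine ⟨_, hv, hvc, exists_mul_eq_of_inTranslate hS hmin.prop ?_ ?_⟩
  · exact fun h' => hleft (h'.mono hS le_rfl hvc)
  · exact hmin.not_prop_of_lt (Nat.lt_succ_self _)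

theorem exists_mul_eq_in_row {b c b₀ : ℕ} (h : InTranslate S n₁ n₂ n₃ b (c + 1))
    (hlow : ¬ InTranslate S n₁ n₂ n₃ b c) (hleft : ¬ InTranslate S n₁ n₂ n₃ b₀ (c + 1)) :
    ∃ u, b₀ < u ∧ u ≤ b ∧ ∃ γ, u * n₂ + (c + 1) * n₃ = γ * n₁ := by
  have hS' : ∀ w, w ∈ S ↔ ∃ a c b : ℕ, a * n₁ + c * n₃ + b * n₂ = w := fun w => by
    rw [hS]; exact exists_congr fun a => exists_comm.trans <| by simp only [add_right_comm]
  obtain ⟨u, hu, hub, γ, hγ⟩ := exists_mul_eq_in_column hS' (inTranslate_swap.2 h)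
    (mt inTranslate_swap.1 hlow) (mt inTranslate_swap.1 hleft)
  exact ⟨u, hu, hub, γ, by linarith⟩

theorem relation_coeff_eq {u v u' v' γ γ' : ℕ} (hu : u' ≤ u) (hv : v ≤ v')
    (hd : ¬ InTranslate S n₁ n₂ n₃ (u - u') 0) (he : ¬ InTranslate S n₁ n₂ n₃ 0 (v' - v))
    (h : u * n₂ + v * n₃ = γ * n₁) (h' : u' * n₂ + v' * n₃ = γ' * n₁) : γ = γ' := by
  obtain ⟨d, rfl⟩ := Nat.exists_eq_add_of_le hu
  obtain ⟨e, rfl⟩ := Nat.exists_eq_add_of_le hv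
  simp only [Nat.add_sub_cancel_left] at hd he
  rcases lt_trichotomy γ γ' with hlt | rfl | hlt
  · obtain ⟨t, rfl⟩ := Nat.exists_eq_add_of_lt hlt
    exact absurd ⟨t * n₁ + d * n₂ + 0 * n₃, (hS _).2 ⟨t, d, 0, rfl⟩, by linarith⟩ he
  · rfl
  · obtain ⟨t, rfl⟩ := Nat.exists_eq_add_of_lt hlt
    exact absurd ⟨t * n₁ + 0 * n₂ + e * n₃, (hS _).2 ⟨t, 0, e, rfl⟩, by linarith⟩ hd

theorem IsPF.exists_add_eq (hn₁ : n₁ ≠ 0) {p : ℕ} (hp : IsPF S p) :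
    ∃ b c, p + n₁ = b * n₂ + c * n₃ := by
  obtain ⟨a, b, c, habc⟩ := (hS _).1 (hp.2 n₁ ((hS _).2 ⟨1, 0, 0, by ring⟩) hn₁)
  cases a with
  | zero => exact ⟨b, c, by linarith⟩
  | succ a => exact absurd ((hS p).2 ⟨a, b, c, by linarith⟩) hp.1

theorem IsPF.inTranslate_succ_left (hn₂ : n₂ ≠ 0) {p b c : ℕ} (hp : IsPF S p)
    (h : p + n₁ = b * n₂ + c * n₃) : InTranslate S n₁ n₂ n₃ (b + 1) c :=
  ⟨p + n₂, hp.2 n₂ ((hS _).2 ⟨0, 1, 0, by ring⟩) hn₂, by linarith⟩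

theorem IsPF.inTranslate_succ_right (hn₃ : n₃ ≠ 0) {p b c : ℕ} (hp : IsPF S p)
    (h : p + n₁ = b * n₂ + c * n₃) : InTranslate S n₁ n₂ n₃ b (c + 1) :=
  ⟨p + n₃, hp.2 n₃ ((hS _).2 ⟨0, 0, 1, by ring⟩) hn₃, by linarith⟩

theorem IsPF.eq_of_le {p q bp cp bq cq : ℕ} (hp : IsPF S p) (hq : IsPF S q)
    (hpe : p + n₁ = bp * n₂ + cp * n₃) (hqe : q + n₁ = bq * n₂ + cq * n₃) (hb : bp ≤ bq)
    (hc : cp ≤ cq) : p = q := by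
  obtain ⟨x, rfl⟩ := Nat.exists_eq_add_of_le hb
  obtain ⟨y, rfl⟩ := Nat.exists_eq_add_of_le hc
  exact hp.eq_of_add_eq hq ((hS _).2 ⟨0, x, y, rfl⟩) (by linarith)

theorem IsPF.inTranslate_zero_of_lt (hn₂ : n₂ ≠ 0) (hn₃ : n₃ ≠ 0) {p₁ p₂ b₁ c₁ b₂ c₂ : ℕ}
    (hp₁ : IsPF S p₁) (hp₂ : IsPF S p₂) (hne : p₁ ≠ p₂)
    (h₁ : p₁ + n₁ = b₁ * n₂ + c₁ * n₃) (h₂ : p₂ + n₁ = b₂ * n₂ + c₂ * n₃)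
    (hb : b₂ < b₁) (hc : c₁ < c₂) : InTranslate S n₁ n₂ n₃ 0 (c₂ + 1) := by
  by_contra h₀
  have hP₁ := hp₁.not_inTranslate h₁
  have hP₂ := hp₂.not_inTranslate h₂
  -- `A = (b₂ + 1, vA)`, `B = (uB, c₂ + 1)` and `C = (uC, c₁ + 1)` are the lowest points of the
  -- translate in their column or row; their relations share one multiple of `n₁`, which makes
  -- `p₁ - p₂` a multiple of `n₂`.
  obtain ⟨vA, hvA, hvA', γ, hA⟩ := exists_mul_eq_in_column hS
    (hp₂.inTranslate_succ_left hS hn₂ h₂) hP₂ (fun h => hP₁ (h.mono hS (by omega) le_rfl))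
  obtain ⟨uB, huB, huB', γB, hB⟩ := exists_mul_eq_in_row hS
    (hp₂.inTranslate_succ_right hS hn₃ h₂) hP₂ h₀
  obtain ⟨uC, huC, huC', γC, hC⟩ := exists_mul_eq_in_row hS
    (hp₁.inTranslate_succ_right hS hn₃ h₁) hP₁ (fun h => hP₂ (h.mono hS le_rfl (by omega)))
  obtain rfl : γ = γB := relation_coeff_eq hS (by omega) (by omega)
    (fun h => hP₁ (h.mono hS (by omega) (by omega))) (fun h => h₀ (h.mono hS le_rfl (by omega)))
    hA hB
  obtain rfl : γC = γ := relation_coeff_eq hS (by omega) (by omega)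
    (fun h => hP₁ (h.mono hS (by omega) (by omega))) (fun h => h₀ (h.mono hS le_rfl (by omega)))
    hC hA
  exact hne (hp₁.eq_of_add_mul_eq hp₂ ((hS _).2 ⟨0, 1, 0, by ring⟩)
    (n := n₂) (a := uC + b₂) (b := b₁ + uB) (by linarith))

theorem IsPF.height_lt_of_le (hn₂ : n₂ ≠ 0) (hn₃ : n₃ ≠ 0) {p q r bp cp bq cq br cr : ℕ}
    (hp : IsPF S p) (hq : IsPF S q) (hr : IsPF S r) (hpq : p ≠ q) (hrq : r ≠ q)
    (hpe : p + n₁ = bp * n₂ + cp * n₃) (hqe : q + n₁ = bq * n₂ + cq * n₃)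
    (hre : r + n₁ = br * n₂ + cr * n₃) (hb : bq ≤ bp) : cr < cq := by
  have hc : cp < cq := lt_of_not_ge fun h => hpq (hq.eq_of_le hS hp hqe hpe hb h).symm
  have hb' : bq < bp := lt_of_le_of_ne hb fun h => hpq (hp.eq_of_le hS hq hpe hqe h.ge hc.le)
  have h₀ := hp.inTranslate_zero_of_lt hS hn₂ hn₃ hq hpq hpe hqe hb' hc
  have hcr : cr ≤ cq := le_of_not_gt fun h => hr.not_inTranslate hre (h₀.mono hS (Nat.zero_le _) h)
  refine lt_of_le_of_ne hcr fun h => hrq ?_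
  rcases le_total br bq with h' | h'
  · exact hr.eq_of_le hS hq hre hqe h' h.le
  · exact (hq.eq_of_le hS hr hqe hre h' h.ge).symm

theorem isPF_eq_or_eq_or_eq (hn₁ : n₁ ≠ 0) (hn₂ : n₂ ≠ 0) (hn₃ : n₃ ≠ 0) {p q r : ℕ}
    (hp : IsPF S p) (hq : IsPF S q) (hr : IsPF S r) : p = q ∨ p = r ∨ q = r := by
  by_contra! hne
  obtain ⟨hpq, hpr, hqr⟩ := hne
  obtain ⟨bp, cp, hpe⟩ := hp.exists_add_eq hS hn₁
  obtain ⟨bq, cq, hqe⟩ := hq.exists_add_eq hS hn₁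
  obtain ⟨br, cr, hre⟩ := hr.exists_add_eq hS hn₁
  -- the corner with the least `b` is strictly the highest, and so is the left one of the others
  have := hp.height_lt_of_le hS hn₂ hn₃ hq hr hpq hqr.symm hpe hqe hre
  have := hq.height_lt_of_le hS hn₂ hn₃ hp hr hpq.symm hpr.symm hqe hpe hre
  have := hp.height_lt_of_le hS hn₂ hn₃ hr hq hpr hqr hpe hre hqe
  have := hr.height_lt_of_le hS hn₂ hn₃ hp hq hpr.symm hpq.symm hre hpe hqe
  have := hq.height_lt_of_le hS hn₂ hn₃ hr hp hqr hpr hqe hre hpe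
  have := hr.height_lt_of_le hS hn₂ hn₃ hq hp hqr.symm hpq hre hqe hpe
  omega

end ThreeGenerated

theorem mem_closure_triple_iff {n₁ n₂ n₃ w : ℕ} :
    w ∈ AddSubmonoid.closure ({n₁, n₂, n₃} : Set ℕ) ↔
      ∃ a b c : ℕ, a * n₁ + b * n₂ + c * n₃ = w := by
  rw [← Set.singleton_union, AddSubmonoid.closure_union, AddSubmonoid.mem_sup]
  simp only [AddSubmonoid.mem_closure_singleton, AddSubmonoid.mem_closure_pair, smul_eq_mul]
  constructor
  · rintro ⟨_, ⟨a, rfl⟩, _, ⟨b, c, rfl⟩, rfl⟩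
    exact ⟨a, b, c, by ring⟩
  · rintro ⟨a, b, c, rfl⟩
    exact ⟨_, ⟨a, rfl⟩, _, ⟨b, c, rfl⟩, by ring⟩

end NumSgp

open NumSgp

/-- for a 3-generated numerical semigroup, `res(H) ≤ g(H) - n(H)`. -/
theorem stmt_9 (H : Set ℕ) (hnum : IsNumSgp H)
    (hgen : ∃ n₁ n₂ n₃ : ℕ, H = genBy {n₁, n₂, n₃})
    (hmin : ∀ x y : ℕ, H ≠ genBy {x, y}) :
    (res H : ℤ) ≤ (gaps H : ℤ) - (nongaps H : ℤ) := by
  obtain ⟨n₁, n₂, n₃, rfl⟩ := hgen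
  unfold genBy at hnum hmin ⊢
  have hn₁ : n₁ ≠ 0 := by
    rintro rfl
    exact hmin n₂ n₃ (by rw [AddSubmonoid.closure_insert_zero])
  have hn₂ : n₂ ≠ 0 := by
    rintro rfl
    exact hmin n₁ n₃ (by rw [Set.insert_comm, AddSubmonoid.closure_insert_zero])
  have hn₃ : n₃ ≠ 0 := by
    rintro rfl
    exact hmin n₁ n₂ (by rw [Set.pair_comm, Set.insert_comm, AddSubmonoid.closure_insert_zero])
  obtain ⟨F, hF, hFmax⟩ := Set.exists_max_image _ id hnum.2.2 <| Set.nonempty_compl.2 fun h =>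
    hmin 1 1 (by rw [h, Set.pair_eq_singleton, Nat.addSubmonoidClosure_one]; rfl)
  have hF : IsGreatest _ F := ⟨hF, fun n hn => hFmax n hn⟩
  have hres := res_le_ncard_holes hF fun _ _ _ =>
    isPF_eq_or_eq_or_eq (fun _ => mem_closure_triple_iff) hn₁ hn₂ hn₃
  have hgaps := ncard_holes_add_nongaps_le_gaps hF
  omega
end
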